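/- arXiv:2105.15032 — 9 statements merged into one kernel-verified Lean document; each statement's English description precedes it below -/
import Mathlib

section
/- Consider the fixed-price bilateral trade mechanism that trades the item if and only if v_b ≥ p ≥ v_s, where the realized welfare equals v_b if a trade occurs and v_s otherwise. With the balanced price p = (1/2)·E[max(v_s, v_b)], the expected welfare of this mechanism is at least (1/2)·E[max(v_s, v_b)]. -/
/-!
Write `s = E[v_s]`, `x = E[(v_b - p)⁺]`, `y = E[(p - v_s)⁺]` and `q = P(v_s ≤ p)`. Pointwise the
welfare is at least `v_s + 1{v_s ≤ p} · (v_b - p)⁺`, so by independence its expectation is at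
least `s + q x`. On the other hand `max(v_s, v_b) ≤ v_s + (v_b - p)⁺ + (p - v_s)⁺` gives
`2p ≤ s + x + y`, trivially `p ≤ s + y`, and `v_s ≥ 0` gives `y ≤ p q`; these three
inequalities force `p ≤ s + q x`.
-/

open MeasureTheory ProbabilityTheory

/-- Multiplying by `p > 0`: `p (p - s) ≤ y (2p - s - y) ≤ y x ≤ p q x`, where the first step is
`(s + y - p) (p - y) ≥ 0`. -/
theorem le_add_mul_of_two_mul_le {p s q x y : ℝ} (hq₀ : 0 ≤ q) (hq₁ : q ≤ 1) (hx : 0 ≤ x)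
    (hy : 0 ≤ y) (h₁ : 2 * p ≤ s + x + y) (h₂ : p ≤ s + y) (h₃ : y ≤ p * q) :
    p ≤ s + q * x := by
  rcases lt_or_ge 0 p with hp | hp
  · have hyp : y ≤ p := h₃.trans (mul_le_of_le_one_right hp.le hq₁)
    refine le_of_mul_le_mul_left ?_ hp
    nlinarith [mul_nonneg (sub_nonneg.2 h₂) (sub_nonneg.2 hyp), mul_le_mul_of_nonneg_right h₃ hx]
  · nlinarith [mul_nonneg hq₀ hx]

theorem max_le_add_posPart_add_posPart (p a b : ℝ) : max a b ≤ a + (b - p)⁺ + (p - a)⁺ :=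
  max_le (by linarith [posPart_nonneg (b - p), posPart_nonneg (p - a)])
    (by linarith [le_posPart (b - p), le_posPart (p - a)])

theorem posPart_sub_le_mul_indicator {a : ℝ} (p : ℝ) (ha : 0 ≤ a) :
    (p - a)⁺ ≤ p * (Set.Iic p).indicator 1 a := by
  by_cases hap : a ≤ p
  · simpa [hap] using sub_le_self p ha
  · simp [hap, posPart_eq_zero.2 (sub_nonpos.2 (not_le.1 hap).le)]

noncomputable def fixedPriceWelfare (p seller buyer : ℝ) : ℝ :=
  if buyer ≥ p ∧ p ≥ seller then buyer else seller

theorem add_indicator_mul_posPart_le_fixedPriceWelfare (p a b : ℝ) :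
    a + (Set.Iic p).indicator 1 a * (b - p)⁺ ≤ fixedPriceWelfare p a b := by
  unfold fixedPriceWelfare
  by_cases ha : a ≤ p
  · by_cases hb : p ≤ b
    · rw [Set.indicator_of_mem (show a ∈ Set.Iic p from ha), Pi.one_apply, one_mul,
        posPart_eq_self.2 (sub_nonneg.2 hb), if_pos ⟨hb, ha⟩]
      linarith
    · simp [ha, hb, posPart_eq_zero.2 (sub_nonpos.2 (not_le.1 hb).le)]
  · simp [ha, Set.indicator_of_notMem]

section

variable {Ω : Type*} [MeasurableSpace Ω] {μ : Measure Ω} {vs vb : Ω → ℝ}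

theorem integral_indicator_Iic_comp (hvs : Measurable vs) (p : ℝ) :
    ∫ ω, (Set.Iic p).indicator (1 : ℝ → ℝ) (vs ω) ∂μ = μ.real {ω | vs ω ≤ p} := by
  simp_rw [← Set.indicator_comp_right]
  exact integral_indicator_one (hvs measurableSet_Iic)

theorem integrable_indicator_Iic_comp [IsFiniteMeasure μ] (hvs : Measurable vs) (p : ℝ) :
    Integrable (fun ω => (Set.Iic p).indicator (1 : ℝ → ℝ) (vs ω)) μ := by
  simp_rw [← Set.indicator_comp_right]
  exact (integrable_const 1).indicator (hvs measurableSet_Iic)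

theorem integral_max_le_add_posPart_add_posPart [IsFiniteMeasure μ] (hvs_int : Integrable vs μ)
    (hvb_int : Integrable vb μ) (p : ℝ) :
    ∫ ω, max (vs ω) (vb ω) ∂μ ≤
      ∫ ω, vs ω ∂μ + ∫ ω, (vb ω - p)⁺ ∂μ + ∫ ω, (p - vs ω)⁺ ∂μ := by
  have hx_int : Integrable (fun ω => (vb ω - p)⁺) μ := (hvb_int.sub (integrable_const p)).pos_part
  have hy_int : Integrable (fun ω => (p - vs ω)⁺) μ :=
    ((integrable_const p).sub hvs_int).pos_part
  have hsum_int : Integrable (fun ω => vs ω + (vb ω - p)⁺) μ := hvs_int.add hx_int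
  rw [← integral_add hvs_int hx_int, ← integral_add hsum_int hy_int]
  exact integral_mono (hvs_int.sup hvb_int) (hsum_int.add hy_int)
    fun ω => max_le_add_posPart_add_posPart p (vs ω) (vb ω)

theorem le_integral_add_integral_posPart [IsProbabilityMeasure μ] (hvs_int : Integrable vs μ)
    (p : ℝ) : p ≤ ∫ ω, vs ω ∂μ + ∫ ω, (p - vs ω)⁺ ∂μ := by
  have hy_int : Integrable (fun ω => (p - vs ω)⁺) μ :=
    ((integrable_const p).sub hvs_int).pos_part
  rw [← integral_add hvs_int hy_int]
  calc p = ∫ _, p ∂μ := by simp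
    _ ≤ ∫ ω, (vs ω + (p - vs ω)⁺) ∂μ :=
      integral_mono (integrable_const p) (hvs_int.add hy_int)
        fun ω => by linarith [le_posPart (p - vs ω)]

theorem integral_posPart_sub_le_mul_measureReal [IsFiniteMeasure μ] (hvs : Measurable vs)
    (hvs_int : Integrable vs μ) (hvs_nonneg : ∀ ω, 0 ≤ vs ω) (p : ℝ) :
    ∫ ω, (p - vs ω)⁺ ∂μ ≤ p * μ.real {ω | vs ω ≤ p} := by
  rw [← integral_indicator_Iic_comp hvs p, ← integral_const_mul]
  exact integral_mono ((integrable_const p).sub hvs_int).pos_part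
    ((integrable_indicator_Iic_comp hvs p).const_mul p)
    fun ω => posPart_sub_le_mul_indicator p (hvs_nonneg ω)

theorem integrable_fixedPriceWelfare (hvs : Measurable vs) (hvb : Measurable vb)
    (hvs_int : Integrable vs μ) (hvb_int : Integrable vb μ) (p : ℝ) :
    Integrable (fun ω => fixedPriceWelfare p (vs ω) (vb ω)) μ := by
  refine (hvs_int.abs.add hvb_int.abs).mono' ?_ (ae_of_all _ fun ω => ?_)
  · exact (Measurable.ite ((measurableSet_le measurable_const hvb).inter
      (measurableSet_le hvs measurable_const)) hvb hvs).aestronglyMeasurable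
  · unfold fixedPriceWelfare
    split_ifs <;> simp [abs_nonneg]

theorem add_mul_le_integral_fixedPriceWelfare [IsFiniteMeasure μ] (hvs : Measurable vs)
    (hvb : Measurable vb) (hvs_int : Integrable vs μ) (hvb_int : Integrable vb μ)
    (hindep : IndepFun vs vb μ) (p : ℝ) :
    ∫ ω, vs ω ∂μ + μ.real {ω | vs ω ≤ p} * ∫ ω, (vb ω - p)⁺ ∂μ ≤
      ∫ ω, fixedPriceWelfare p (vs ω) (vb ω) ∂μ := by
  set ind : ℝ → ℝ := (Set.Iic p).indicator 1
  have hind_int : Integrable (fun ω => ind (vs ω)) μ := integrable_indicator_Iic_comp hvs p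
  have hx_int : Integrable (fun ω => (vb ω - p)⁺) μ := (hvb_int.sub (integrable_const p)).pos_part
  have hindep_comp : IndepFun (fun ω => ind (vs ω)) (fun ω => (vb ω - p)⁺) μ :=
    hindep.comp (measurable_one.indicator measurableSet_Iic : Measurable ind)
      (show Measurable fun b : ℝ => (b - p)⁺ by fun_prop)
  have hprod_int : Integrable (fun ω => ind (vs ω) * (vb ω - p)⁺) μ :=
    hindep_comp.integrable_mul hind_int hx_int
  have hprod : ∫ ω, ind (vs ω) * (vb ω - p)⁺ ∂μ =
      μ.real {ω | vs ω ≤ p} * ∫ ω, (vb ω - p)⁺ ∂μ := by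
    rw [← integral_indicator_Iic_comp hvs p]
    exact hindep_comp.integral_mul_eq_mul_integral hind_int.aestronglyMeasurable
      hx_int.aestronglyMeasurable
  rw [← hprod, ← integral_add hvs_int hprod_int]
  exact integral_mono (hvs_int.add hprod_int)
    (integrable_fixedPriceWelfare hvs hvb hvs_int hvb_int p)
    fun ω => add_indicator_mul_posPart_le_fixedPriceWelfare p (vs ω) (vb ω)

end

theorem bilateral_trade_balanced_price_welfare_general
    {Ω : Type*} [MeasurableSpace Ω] (μ : Measure Ω) [IsProbabilityMeasure μ]
    (vs vb : Ω → ℝ)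
    (hvs_meas : Measurable vs) (hvb_meas : Measurable vb)
    (hvs_nonneg : ∀ ω, 0 ≤ vs ω)
    (hvs_int : Integrable vs μ) (hvb_int : Integrable vb μ)
    (hindep : IndepFun vs vb μ)
    (p : ℝ) (hp : p = (1 / 2) * ∫ ω, max (vs ω) (vb ω) ∂μ) :
    (1 / 2) * (∫ ω, max (vs ω) (vb ω) ∂μ) ≤
      ∫ ω, (if vb ω ≥ p ∧ p ≥ vs ω then vb ω else vs ω) ∂μ := by
  rw [← hp]
  calc p ≤ ∫ ω, vs ω ∂μ + μ.real {ω | vs ω ≤ p} * ∫ ω, (vb ω - p)⁺ ∂μ :=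
        le_add_mul_of_two_mul_le measureReal_nonneg measureReal_le_one
          (integral_nonneg fun _ => posPart_nonneg _) (integral_nonneg fun _ => posPart_nonneg _)
          (by linarith [integral_max_le_add_posPart_add_posPart (μ := μ) hvs_int hvb_int p])
          (le_integral_add_integral_posPart hvs_int p)
          (integral_posPart_sub_le_mul_measureReal hvs_meas hvs_int hvs_nonneg p)
    _ ≤ ∫ ω, fixedPriceWelfare p (vs ω) (vb ω) ∂μ :=
        add_mul_le_integral_fixedPriceWelfare hvs_meas hvb_meas hvs_int hvb_int hindep p

/-- **Bilateral trade via a balanced price.**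
Let `vs` (the seller's value) and `vb` (the buyer's value) be independent, nonnegative,
integrable real random variables and let `p = (1/2) · E[max(vs, vb)]` be the balanced price.
The fixed-price mechanism trades the item iff `vb ≥ p ≥ vs`; its realized welfare is `vb`
if a trade occurs and `vs` otherwise.  Its expected welfare is at least
`(1/2) · E[max(vs, vb)]`. -/
theorem bilateral_trade_balanced_price_welfare
    {Ω : Type*} [MeasurableSpace Ω] (μ : Measure Ω) [IsProbabilityMeasure μ]
    (vs vb : Ω → ℝ)
    (hvs_meas : Measurable vs) (hvb_meas : Measurable vb)
    (hvs_nonneg : ∀ ω, 0 ≤ vs ω) (hvb_nonneg : ∀ ω, 0 ≤ vb ω)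
    (hvs_int : Integrable vs μ) (hvb_int : Integrable vb μ)
    (hindep : IndepFun vs vb μ)
    (p : ℝ) (hp : p = (1 / 2) * ∫ ω, max (vs ω) (vb ω) ∂μ) :
    (1 / 2) * (∫ ω, max (vs ω) (vb ω) ∂μ) ≤
      ∫ ω, (if vb ω ≥ p ∧ p ≥ vs ω then vb ω else vs ω) ∂μ :=
  bilateral_trade_balanced_price_welfare_general μ vs vb hvs_meas hvb_meas hvs_nonneg hvs_int
    hvb_int hindep p hp
end

section
/- The expected surplus of the fixed-price bilateral trade mechanism satisfies E[(v_s − p)^+] + P(v_s < p)·E[(v_b − p)^+] ≥ p·P(v_s < p and v_b < p), where x^+ denotes max(x, 0). -/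
/-! Pointwise, `max a b ≤ (a - p)⁺ + (b - p)⁺ + p`; integrating with `2p = E[max(vs, vb)]` gives
`p ≤ E[(vs - p)⁺] + E[(vb - p)⁺]`. Multiplying by `P(vs < p ∧ vb < p)`, which is at most `1` and at
most `P(vs < p)`, yields the bound. -/

open MeasureTheory ProbabilityTheory

theorem max_le_max_sub_zero_add_max_sub_zero_add {α : Type*} [AddCommGroup α] [LinearOrder α]
    [IsOrderedAddMonoid α] (a b p : α) :
    max a b ≤ max (a - p) 0 + max (b - p) 0 + p := by
  apply max_le
  · calc a = (a - p) + 0 + p := by abel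
      _ ≤ _ := add_le_add (add_le_add (le_max_left _ _) (le_max_right _ _)) le_rfl
  · calc b = 0 + (b - p) + p := by abel
      _ ≤ _ := add_le_add (add_le_add (le_max_right _ _) (le_max_left _ _)) le_rfl

theorem integral_max_le_integral_max_sub_zero_add {Ω : Type*} [MeasurableSpace Ω]
    {μ : Measure Ω} [IsProbabilityMeasure μ] {f g : Ω → ℝ} (hf : Integrable f μ)
    (hg : Integrable g μ) (p : ℝ) :
    ∫ ω, max (f ω) (g ω) ∂μ ≤
      (∫ ω, max (f ω - p) 0 ∂μ) + (∫ ω, max (g ω - p) 0 ∂μ) + p := by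
  have hf' : Integrable (fun ω => max (f ω - p) 0) μ := (hf.sub (integrable_const p)).pos_part
  have hg' : Integrable (fun ω => max (g ω - p) 0) μ := (hg.sub (integrable_const p)).pos_part
  have hfg : Integrable (fun ω => max (f ω - p) 0 + max (g ω - p) 0) μ := hf'.add hg'
  calc ∫ ω, max (f ω) (g ω) ∂μ
      ≤ ∫ ω, (max (f ω - p) 0 + max (g ω - p) 0 + p) ∂μ :=
        integral_mono (hf.sup hg) (hfg.add (integrable_const p))
          fun ω => max_le_max_sub_zero_add_max_sub_zero_add (f ω) (g ω) p
    _ = _ := by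
        rw [integral_add hfg (integrable_const p), integral_add hf' hg',
          integral_const, probReal_univ, one_smul]

theorem mul_le_add_mul_of_le_add {p a b t q : ℝ} (hp : p ≤ a + b) (ha : 0 ≤ a) (hb : 0 ≤ b)
    (ht₀ : 0 ≤ t) (ht₁ : t ≤ 1) (htq : t ≤ q) :
    p * t ≤ a + q * b :=
  calc p * t ≤ (a + b) * t := by gcongr
    _ = a * t + t * b := by ring
    _ ≤ a * 1 + q * b := by gcongr
    _ = a + q * b := by ring

theorem bilateral_trade_surplus_bound_general
    {Ω : Type*} [MeasurableSpace Ω] (μ : Measure Ω) [IsProbabilityMeasure μ]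
    (vs vb : Ω → ℝ)
    (hvs_int : Integrable vs μ) (hvb_int : Integrable vb μ)
    (p : ℝ) (hp : p = (1 / 2) * ∫ ω, max (vs ω) (vb ω) ∂μ) :
    p * (μ {ω | vs ω < p ∧ vb ω < p}).toReal ≤
      (∫ ω, max (vs ω - p) 0 ∂μ) +
        (μ {ω | vs ω < p}).toReal * ∫ ω, max (vb ω - p) 0 ∂μ := by
  have hp_le : p ≤ (∫ ω, max (vs ω - p) 0 ∂μ) + ∫ ω, max (vb ω - p) 0 ∂μ := by
    have := integral_max_le_integral_max_sub_zero_add hvs_int hvb_int p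
    linarith
  exact mul_le_add_mul_of_le_add hp_le (integral_nonneg fun _ => le_max_right _ _)
    (integral_nonneg fun _ => le_max_right _ _) measureReal_nonneg measureReal_le_one
    (measureReal_mono fun _ h => h.1)

/-- **Surplus bound for the fixed-price bilateral trade mechanism.**
Let `vs` (the seller's value) and `vb` (the buyer's value) be independent, nonnegative,
integrable real random variables and let `p = (1/2) · E[max(vs, vb)]`.
Then the expected surplus satisfies
`E[(vs − p)⁺] + P(vs < p) · E[(vb − p)⁺] ≥ p · P(vs < p ∧ vb < p)`. -/
theorem bilateral_trade_surplus_bound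
    {Ω : Type*} [MeasurableSpace Ω] (μ : Measure Ω) [IsProbabilityMeasure μ]
    (vs vb : Ω → ℝ)
    (hvs_meas : Measurable vs) (hvb_meas : Measurable vb)
    (hvs_nonneg : ∀ ω, 0 ≤ vs ω) (hvb_nonneg : ∀ ω, 0 ≤ vb ω)
    (hvs_int : Integrable vs μ) (hvb_int : Integrable vb μ)
    (hindep : IndepFun vs vb μ)
    (p : ℝ) (hp : p = (1 / 2) * ∫ ω, max (vs ω) (vb ω) ∂μ) :
    p * (μ {ω | vs ω < p ∧ vb ω < p}).toReal ≤
      (∫ ω, max (vs ω - p) 0 ∂μ) +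
        (μ {ω | vs ω < p}).toReal * ∫ ω, max (vb ω - p) 0 ∂μ :=
  bilateral_trade_surplus_bound_general μ vs vb hvs_int hvb_int p hp
end

section
/- Let r ≥ 1, let X ∈ 𝓘 and i ∉ X be such that X ∪ {i} ∈ 𝓘 and |X ∪ {i}| ≤ r. Then f_r(X ∪ {i}) ≤ f_{r−1}(X); equivalently, f_r(X) − f_r(X ∪ {i}) ≥ f_r(X) − f_{r−1}(X). -/
open Finset

/-- `Y` is feasible for `(X, r)`: it is disjoint from `X`, `X ∪ Y` is independent in the
matroid `M`, and `|X ∪ Y| ≤ r`. -/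
def MatroidFeasible {α : Type*} [DecidableEq α] (M : Matroid α) (r : ℕ)
    (X Y : Finset α) : Prop :=
  Disjoint X Y ∧ M.Indep ↑(X ∪ Y) ∧ (X ∪ Y).card ≤ r

/-- `truncOpt M w r X = f_r(X)`: the maximum weight `w(Y)` over all sets `Y` feasible for
`(X, r)`, i.e. the weight of a maximum-weight basis of the matroid contracted by `X` and
truncated at rank `r`. -/
noncomputable def truncOpt {α : Type*} [DecidableEq α] (M : Matroid α) (w : α → ℝ)
    (r : ℕ) (X : Finset α) : ℝ :=
  sSup {t : ℝ | ∃ Y : Finset α, MatroidFeasible M r X Y ∧ t = ∑ e ∈ Y, w e}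

section

variable {α : Type*} [DecidableEq α] {M : Matroid α} {r : ℕ} {X Y : Finset α}

theorem matroidFeasible_empty (hX : M.Indep ↑X) (hcard : X.card ≤ r) :
    MatroidFeasible M r X ∅ :=
  ⟨disjoint_empty_right X, by simpa using hX, by simpa using hcard⟩

theorem MatroidFeasible.of_insert {i : α} (hiX : i ∉ X)
    (hY : MatroidFeasible M r (insert i X) Y) : MatroidFeasible M (r - 1) X Y := by
  obtain ⟨hdisj, hind, hcard⟩ := hY
  have hiY : i ∉ Y := disjoint_left.mp hdisj (mem_insert_self i X)
  have hunion : insert i X ∪ Y = insert i (X ∪ Y) := insert_union i X Y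
  rw [hunion, card_insert_of_notMem (by simp [hiX, hiY])] at hcard
  refine ⟨disjoint_of_subset_left (subset_insert i X) hdisj, hind.subset ?_, by omega⟩
  exact_mod_cast union_subset_union_left (subset_insert i X)

variable [Finite α]

theorem le_truncOpt (w : α → ℝ) (hY : MatroidFeasible M r X Y) :
    ∑ e ∈ Y, w e ≤ truncOpt M w r X := by
  refine le_csSup ((Set.finite_range fun Y : Finset α ↦ ∑ e ∈ Y, w e).bddAbove.mono ?_)
    ⟨Y, hY, rfl⟩
  rintro _ ⟨Z, -, rfl⟩
  exact ⟨Z, rfl⟩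

theorem truncOpt_le_truncOpt_of_feasible_imp (w : α → ℝ) {r' : ℕ} {X' : Finset α}
    (hne : MatroidFeasible M r X Y)
    (himp : ∀ Z, MatroidFeasible M r X Z → MatroidFeasible M r' X' Z) :
    truncOpt M w r X ≤ truncOpt M w r' X' :=
  csSup_le ⟨_, Y, hne, rfl⟩ fun _ ⟨Z, hZ, hZw⟩ ↦ hZw ▸ le_truncOpt w (himp Z hZ)

end

theorem truncOpt_insert_le_truncOpt_pred_general
    {α : Type*} [DecidableEq α] [Fintype α] (M : Matroid α) (w : α → ℝ)
    (r : ℕ)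
    (X : Finset α) (i : α) (hiX : i ∉ X)
    (hXi : M.Indep ↑(insert i X))
    (hcard : (insert i X).card ≤ r) :
    truncOpt M w r (insert i X) ≤ truncOpt M w (r - 1) X :=
  truncOpt_le_truncOpt_of_feasible_imp w (matroidFeasible_empty hXi hcard)
    fun _ ↦ MatroidFeasible.of_insert hiX

/-- Let `r ≥ 1`, let `X` be independent, `i ∉ X` with `X ∪ {i}` independent and
`|X ∪ {i}| ≤ r`.  Then `f_r(X ∪ {i}) ≤ f_{r−1}(X)`
(equivalently, `f_r(X) − f_r(X ∪ {i}) ≥ f_r(X) − f_{r−1}(X)`). -/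
theorem truncOpt_insert_le_truncOpt_pred
    {α : Type*} [DecidableEq α] [Fintype α] (M : Matroid α) (w : α → ℝ)
    (hw : ∀ e, 0 ≤ w e) (r : ℕ) (hr : 1 ≤ r)
    (X : Finset α) (i : α) (hiX : i ∉ X)
    (hX : M.Indep ↑X) (hXi : M.Indep ↑(insert i X))
    (hcard : (insert i X).card ≤ r) :
    truncOpt M w r (insert i X) ≤ truncOpt M w (r - 1) X :=
  truncOpt_insert_le_truncOpt_pred_general M w r X i hiX hXi hcard
end

section
/- Let X ∈ 𝓘 and let r' ≤ r be natural numbers with |X| ≤ r'. Then there exist a set Y_r feasible for (X, r) with w(Y_r) = f_r(X) and a set Y_{r'} feasible for (X, r') with w(Y_{r'}) = f_{r'}(X) such that Y_{r'} ⊆ Y_r. (A maximum-weight basis of the truncation to rank r' can be chosen as a subset of a maximum-weight basis of the truncation to rank r.) -/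
/-!
Peeling off a lightest element of an optimal solution for rank `s + 1` leaves an optimal
solution for rank `s`: if some `Y'` feasible for `(X, s)` were heavier, matroid augmentation
would move an element `a` of the optimal solution into `Y'`, and since `a` weighs at least as
much as the peeled element, `Y' ∪ {a}` would beat the optimum for rank `s + 1`. Iterating from
rank `r` down to rank `r'` gives the nested optima.
-/

open Finset

section Optimization

variable {α : Type*} [DecidableEq α] {M : Matroid α} {w : α → ℝ} {r s : ℕ} {X Y Y' : Finset α}

namespace MatroidFeasible

theorem mono_rank (h : MatroidFeasible M r X Y) (hrs : r ≤ s) : MatroidFeasible M s X Y :=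
  ⟨h.1, h.2.1, h.2.2.trans hrs⟩

theorem empty (hX : M.Indep ↑X) (hcard : X.card ≤ r) : MatroidFeasible M r X ∅ :=
  ⟨disjoint_empty_right X, by simpa using hX, by simpa using hcard⟩

theorem exists_insert_of_card_lt (hY : MatroidFeasible M r X Y)
    (hY' : MatroidFeasible M r X Y') (hlt : (X ∪ Y').card < (X ∪ Y).card) :
    ∃ a ∈ Y, a ∉ Y' ∧ MatroidFeasible M r X (insert a Y') := by
  have hlt' : ((X ∪ Y' : Finset α) : Set α).encard < ((X ∪ Y : Finset α) : Set α).encard := by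
    simpa only [Set.encard_coe_eq_coe_finsetCard, Nat.cast_lt] using hlt
  obtain ⟨a, ⟨haXY, haXY'⟩, hindep⟩ := hY'.2.1.augment hY.2.1 hlt'
  simp only [coe_union, Set.mem_union, mem_coe, not_or] at haXY haXY'
  have haY : a ∈ Y := haXY.resolve_left haXY'.1
  refine ⟨a, haY, haXY'.2, disjoint_insert_right.2 ⟨haXY'.1, hY'.1⟩, ?_, ?_⟩
  · rwa [union_insert, coe_insert]
  · rw [union_insert, card_insert_of_notMem (by simpa using haXY')]
    exact Nat.succ_le_of_lt (hlt.trans_le hY.2.2)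

end MatroidFeasible

variable (M w) in
def IsTruncOptimizer (r : ℕ) (X Y : Finset α) : Prop :=
  MatroidFeasible M r X Y ∧ ∑ e ∈ Y, w e = truncOpt M w r X

section Optimizers

variable [Finite α]

variable (M w r X) in
theorem finite_feasible_weights :
    {t : ℝ | ∃ Y : Finset α, MatroidFeasible M r X Y ∧ t = ∑ e ∈ Y, w e}.Finite :=
  (Set.finite_range fun Y : Finset α ↦ ∑ e ∈ Y, w e).subset
    (by rintro t ⟨Y, -, rfl⟩; exact ⟨Y, rfl⟩)

theorem sum_le_truncOpt (h : MatroidFeasible M r X Y) : ∑ e ∈ Y, w e ≤ truncOpt M w r X :=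
  le_csSup (finite_feasible_weights M w r X).bddAbove ⟨Y, h, rfl⟩

theorem isTruncOptimizer_iff :
    IsTruncOptimizer M w r X Y ↔
      MatroidFeasible M r X Y ∧
        ∀ Y', MatroidFeasible M r X Y' → ∑ e ∈ Y', w e ≤ ∑ e ∈ Y, w e := by
  refine ⟨fun ⟨hY, hmax⟩ ↦ ⟨hY, fun Y' hY' ↦ hmax ▸ sum_le_truncOpt hY'⟩,
    fun ⟨hY, hmax⟩ ↦ ⟨hY, (sum_le_truncOpt hY).antisymm ?_⟩⟩
  exact csSup_le ⟨_, Y, hY, rfl⟩ (by rintro t ⟨Y', hY', rfl⟩; exact hmax Y' hY')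

theorem exists_isTruncOptimizer (hX : M.Indep ↑X) (hcard : X.card ≤ r) :
    ∃ Y, IsTruncOptimizer M w r X Y := by
  have hne : {t : ℝ | ∃ Y : Finset α, MatroidFeasible M r X Y ∧ t = ∑ e ∈ Y, w e}.Nonempty :=
    ⟨_, ∅, .empty hX hcard, rfl⟩
  obtain ⟨Y, hY, hmax⟩ := hne.csSup_mem (finite_feasible_weights M w r X)
  exact ⟨Y, hY, hmax.symm⟩

namespace IsTruncOptimizer

theorem of_card_le (h : IsTruncOptimizer M w (s + 1) X Y) (hcard : (X ∪ Y).card ≤ s) :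
    IsTruncOptimizer M w s X Y := by
  rw [isTruncOptimizer_iff] at h ⊢
  exact ⟨⟨h.1.1, h.1.2.1, hcard⟩, fun Y' hY' ↦ h.2 Y' (hY'.mono_rank s.le_succ)⟩

theorem erase_of_forall_le (h : IsTruncOptimizer M w (s + 1) X Y)
    (hcard : (X ∪ Y).card = s + 1) {e : α} (he : e ∈ Y) (hmin : ∀ a ∈ Y, w e ≤ w a) :
    IsTruncOptimizer M w s X (Y.erase e) := by
  rw [isTruncOptimizer_iff] at h ⊢
  obtain ⟨⟨hdisj, hindep, -⟩, hmax⟩ := h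
  have heX : e ∉ X := disjoint_right.1 hdisj he
  have hunion : X ∪ Y.erase e = (X ∪ Y).erase e := by
    rw [erase_union_distrib, erase_eq_of_notMem heX]
  refine ⟨⟨hdisj.mono_right (erase_subset e Y), hindep.subset ?_, ?_⟩, fun Y' hY' ↦ ?_⟩
  · simpa only [hunion, coe_erase] using Set.sdiff_subset
  · rw [hunion, card_erase_of_mem (mem_union_right X he), hcard, Nat.add_sub_cancel]
  obtain ⟨a, haY, haY', hins⟩ := MatroidFeasible.exists_insert_of_card_lt
    ⟨hdisj, hindep, hcard.le⟩ (hY'.mono_rank s.le_succ) (hcard ▸ Nat.lt_succ_of_le hY'.2.2)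
  have hins_le := hmax _ hins
  rw [sum_insert haY', ← sum_erase_add Y w he] at hins_le
  linarith [hmin a haY]

theorem exists_subset_succ (h : IsTruncOptimizer M w (s + 1) X Y) (hX : X.card ≤ s) :
    ∃ Z ⊆ Y, IsTruncOptimizer M w s X Z := by
  by_cases hle : (X ∪ Y).card ≤ s
  · exact ⟨Y, Subset.rfl, h.of_card_le hle⟩
  have hcard : (X ∪ Y).card = s + 1 := le_antisymm h.1.2.2 (by omega)
  have hY : Y.Nonempty := by
    rw [← card_pos]
    have := card_union_of_disjoint h.1.1 ▸ hcard
    omega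
  obtain ⟨e, he, hmin⟩ := exists_min_image Y w hY
  exact ⟨Y.erase e, erase_subset e Y, h.erase_of_forall_le hcard he hmin⟩

theorem exists_subset_of_le (h : IsTruncOptimizer M w r X Y) {r' : ℕ} (hrr : r' ≤ r)
    (hX : X.card ≤ r') : ∃ Z ⊆ Y, IsTruncOptimizer M w r' X Z := by
  induction r, hrr using Nat.le_induction generalizing Y with
  | base => exact ⟨Y, Subset.rfl, h⟩
  | succ s hs ih =>
    obtain ⟨Z, hZY, hZ⟩ := h.exists_subset_succ (hX.trans hs)
    obtain ⟨Z', hZ'Z, hZ'⟩ := ih hZ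
    exact ⟨Z', hZ'Z.trans hZY, hZ'⟩

end IsTruncOptimizer

end Optimizers

end Optimization

theorem truncOpt_nested_maximizers_general
    {α : Type*} [DecidableEq α] [Fintype α] (M : Matroid α) (w : α → ℝ)
    (r r' : ℕ) (hrr : r' ≤ r)
    (X : Finset α) (hX : M.Indep ↑X) (hcard : X.card ≤ r') :
    ∃ Yr Yr' : Finset α,
      MatroidFeasible M r X Yr ∧ (∑ e ∈ Yr, w e) = truncOpt M w r X ∧
      MatroidFeasible M r' X Yr' ∧ (∑ e ∈ Yr', w e) = truncOpt M w r' X ∧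
      Yr' ⊆ Yr := by
  obtain ⟨Yr, hYr⟩ := exists_isTruncOptimizer (w := w) hX (hcard.trans hrr)
  obtain ⟨Yr', hsub, hYr'⟩ := hYr.exists_subset_of_le hrr hcard
  exact ⟨Yr, Yr', hYr.1, hYr.2, hYr'.1, hYr'.2, hsub⟩

/-- A maximum-weight basis of the truncation to rank `r'` can be chosen as a subset of a
maximum-weight basis of the truncation to rank `r`: for independent `X` with `|X| ≤ r' ≤ r`
there are `Y_r` feasible for `(X, r)` attaining `f_r(X)` and `Y_{r'}` feasible for `(X, r')`
attaining `f_{r'}(X)` with `Y_{r'} ⊆ Y_r`. -/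
theorem truncOpt_nested_maximizers
    {α : Type*} [DecidableEq α] [Fintype α] (M : Matroid α) (w : α → ℝ)
    (hw : ∀ e, 0 ≤ w e) (r r' : ℕ) (hrr : r' ≤ r)
    (X : Finset α) (hX : M.Indep ↑X) (hcard : X.card ≤ r') :
    ∃ Yr Yr' : Finset α,
      MatroidFeasible M r X Yr ∧ (∑ e ∈ Yr, w e) = truncOpt M w r X ∧
      MatroidFeasible M r' X Yr' ∧ (∑ e ∈ Yr', w e) = truncOpt M w r' X ∧
      Yr' ⊆ Yr :=
  truncOpt_nested_maximizers_general M w r r' hrr X hX hcard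
end

section
/- Let X ⊆ X' with X, X' ∈ 𝓘, let i ∉ X' be such that X' ∪ {i} ∈ 𝓘 and |X' ∪ {i}| ≤ r. Then the function Y ↦ f_r(Y) has the diminishing-differences (submodularity) property: f_r(X) − f_r(X ∪ {i}) ≤ f_r(X') − f_r(X' ∪ {i}). -/
open Finset

/-! Take maximum-weight extensions `S ⊇ X` and `T ⊇ X' ∪ {i}`. A matroid exchange moves `i`
from `T` into `S`, trading it for some `e ∈ S \ T` unless `S ∪ {i}` is itself independent and
no larger than `T`; this keeps the total weight and yields independent extensions of `X ∪ {i}`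
and of `X'`. Hence `f_r(X) + f_r(X' ∪ {i}) ≤ f_r(X ∪ {i}) + f_r(X')`. -/

namespace Matroid

variable {α : Type*} {M : Matroid α} {I J : Set α} {i : α}

lemma Indep.insert_indep_or_exists_exchange (hI : M.Indep I) (hJ : M.Indep J) (hi : i ∈ J \ I) :
    (M.Indep (insert i I) ∧ (insert i I).encard ≤ J.encard) ∨
      ∃ e ∈ I \ J, M.Indep (insert i (I \ {e})) ∧ M.Indep (insert e (J \ {i})) := by
  by_cases hiI : M.Indep (insert i I)
  · by_cases hcard : (insert i I).encard ≤ J.encard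
    · exact .inl ⟨hiI, hcard⟩
    obtain ⟨e, ⟨heiI, heJ⟩, hJe⟩ := hJ.augment hiI (not_le.mp hcard)
    have heI : e ∈ I := heiI.resolve_left (by rintro rfl; exact heJ hi.1)
    exact .inr ⟨e, ⟨heI, heJ⟩, hiI.subset (Set.insert_subset_insert Set.sdiff_subset),
      hJe.subset (Set.insert_subset_insert Set.sdiff_subset)⟩
  right
  have hicl : i ∈ M.closure I := by
    by_contra h
    exact hiI ((hI.notMem_closure_iff_of_notMem hi.2 (hJ.subset_ground hi.1)).1 h)
  have hC : ¬ M.fundCircuit i I \ {i} ⊆ M.closure (J \ {i}) := fun h ↦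
    hJ.notMem_closure_sdiff_of_mem hi.1 <| M.closure_subset_closure_of_subset_closure h <|
      (hI.fundCircuit_isCircuit hicl hi.2).mem_closure_sdiff_singleton_of_mem (M.mem_fundCircuit i I)
  obtain ⟨e, ⟨heC, hei⟩, hecl⟩ := Set.not_subset.1 hC
  have heI : e ∈ I := (M.fundCircuit_subset_insert i I heC).resolve_left hei
  have heJ : e ∉ J := fun heJ ↦ hecl (M.mem_closure_of_mem' ⟨heJ, hei⟩ (hI.subset_ground heI))
  refine ⟨e, ⟨heI, heJ⟩, ?_, ?_⟩
  · rw [Set.insert_sdiff_singleton_comm (Ne.symm hei)]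
    exact (hI.mem_fundCircuit_iff hicl hi.2).1 heC
  · exact ((hJ.subset Set.sdiff_subset).insert_indep_iff_of_notMem (fun h ↦ heJ h.1)).2
      ⟨hI.subset_ground heI, hecl⟩

end Matroid

lemma exists_exchange_sum_eq {α : Type*} [DecidableEq α] {M : Matroid α} {S T : Finset α}
    {i : α} {r : ℕ} (w : α → ℝ)
    (hS : M.Indep ↑S) (hT : M.Indep ↑T) (hSr : S.card ≤ r) (hTr : T.card ≤ r) (hiT : i ∈ T) :
    ∃ S' T' : Finset α, M.Indep ↑S' ∧ M.Indep ↑T' ∧ S'.card ≤ r ∧ T'.card ≤ r ∧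
      insert i (S ∩ T) ⊆ S' ∧ T.erase i ⊆ T' ∧
      ∑ e ∈ S', w e + ∑ e ∈ T', w e = ∑ e ∈ S, w e + ∑ e ∈ T, w e := by
  by_cases hiS : i ∈ S
  · exact ⟨S, T, hS, hT, hSr, hTr, insert_subset hiS inter_subset_left, erase_subset i T, rfl⟩
  have hsumT := add_sum_erase T w hiT
  rcases hS.insert_indep_or_exists_exchange hT (i := i) (by simpa using ⟨hiT, hiS⟩) with
    ⟨hiS', hcard⟩ | ⟨e, ⟨heS, heT⟩, hS', hT'⟩
  · refine ⟨insert i S, T.erase i, by simpa using hiS', hT.subset (by simp), ?_,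
      (card_erase_le).trans hTr, insert_subset_insert i inter_subset_left, subset_rfl, ?_⟩
    · rw [← coe_insert, Set.encard_coe_eq_coe_finsetCard, Set.encard_coe_eq_coe_finsetCard,
        Nat.cast_le] at hcard
      exact hcard.trans hTr
    · rw [sum_insert hiS]
      linarith
  · simp only [mem_coe] at heS heT
    refine ⟨insert i (S.erase e), insert e (T.erase i), by simpa using hS', by simpa using hT',
      ?_, ?_, ?_, subset_insert e _, ?_⟩
    · exact (card_insert_le _ _).trans ((card_erase_add_one heS).le.trans hSr)
    · exact (card_insert_le _ _).trans ((card_erase_add_one hiT).le.trans hTr)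
    · exact insert_subset_insert i fun x hx ↦
        mem_erase.2 ⟨ne_of_mem_of_not_mem (mem_inter.1 hx).2 heT, (mem_inter.1 hx).1⟩
    · have hsumS := add_sum_erase S w heS
      rw [sum_insert (fun h ↦ hiS (mem_of_mem_erase h)),
        sum_insert (fun h ↦ heT (mem_of_mem_erase h))]
      linarith

section TruncOpt

variable {α : Type*} [DecidableEq α] [Fintype α] {M : Matroid α} {r : ℕ} {X : Finset α}

lemma finite_setOf_feasible_sum (M : Matroid α) (w : α → ℝ) (r : ℕ) (X : Finset α) :
    {t : ℝ | ∃ Y : Finset α, MatroidFeasible M r X Y ∧ t = ∑ e ∈ Y, w e}.Finite :=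
  (Set.finite_range fun Y : Finset α ↦ ∑ e ∈ Y, w e).subset fun _ ⟨Y, _, hY⟩ ↦ ⟨Y, hY.symm⟩

lemma sum_le_truncOpt_add_sum (w : α → ℝ) {S : Finset α} (hXS : X ⊆ S) (hS : M.Indep ↑S)
    (hSr : S.card ≤ r) : ∑ e ∈ S, w e ≤ truncOpt M w r X + ∑ e ∈ X, w e := by
  have hfeas : MatroidFeasible M r X (S \ X) := by
    refine ⟨disjoint_sdiff, ?_, ?_⟩ <;> rwa [union_sdiff_of_subset hXS]
  have := le_csSup (finite_setOf_feasible_sum M w r X).bddAbove ⟨S \ X, hfeas, rfl⟩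
  rw [← sum_sdiff hXS]
  exact add_le_add_left this _

lemma exists_sum_eq_truncOpt_add_sum (w : α → ℝ) (hX : M.Indep ↑X) (hXr : X.card ≤ r) :
    ∃ S : Finset α, X ⊆ S ∧ M.Indep ↑S ∧ S.card ≤ r ∧
      ∑ e ∈ S, w e = truncOpt M w r X + ∑ e ∈ X, w e := by
  have hempty : MatroidFeasible M r X ∅ := ⟨disjoint_empty_right X, by simpa, by simpa⟩
  obtain ⟨Y, ⟨hXY, hY, hYr⟩, hYw⟩ := Set.Nonempty.csSup_mem
    (s := {t : ℝ | ∃ Y : Finset α, MatroidFeasible M r X Y ∧ t = ∑ e ∈ Y, w e})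
    ⟨_, ∅, hempty, rfl⟩ (finite_setOf_feasible_sum M w r X)
  refine ⟨X ∪ Y, subset_union_left, hY, hYr, ?_⟩
  rw [truncOpt, hYw, sum_union hXY, add_comm]

end TruncOpt

theorem truncOpt_submodular_general
    {α : Type*} [DecidableEq α] [Fintype α] (M : Matroid α) (w : α → ℝ)
    (r : ℕ)
    (X X' : Finset α) (hXX : X ⊆ X')
    (i : α) (hiX' : i ∉ X') (hX'i : M.Indep ↑(insert i X'))
    (hcard : (insert i X').card ≤ r) :
    truncOpt M w r X - truncOpt M w r (insert i X) ≤
      truncOpt M w r X' - truncOpt M w r (insert i X') := by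
  have hXiX' : X ⊆ insert i X' := hXX.trans (subset_insert i X')
  obtain ⟨S, hXS, hS, hSr, hSw⟩ := exists_sum_eq_truncOpt_add_sum w
    (hX'i.subset (coe_subset.2 hXiX')) ((card_le_card hXiX').trans hcard)
  obtain ⟨T, hiX'T, hT, hTr, hTw⟩ := exists_sum_eq_truncOpt_add_sum w hX'i hcard
  obtain ⟨S', T', hS', hT', hS'r, hT'r, hS'sub, hT'sub, hsum⟩ :=
    exists_exchange_sum_eq w hS hT hSr hTr (hiX'T (mem_insert_self i X'))
  have hiXS' : insert i X ⊆ S' :=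
    (insert_subset_insert i (subset_inter hXS (hXiX'.trans hiX'T))).trans hS'sub
  have hX'T' : X' ⊆ T' := fun x hx ↦
    hT'sub (mem_erase.2 ⟨ne_of_mem_of_not_mem hx hiX', hiX'T (mem_insert_of_mem hx)⟩)
  have hS'w := sum_le_truncOpt_add_sum w hiXS' hS' hS'r
  have hT'w := sum_le_truncOpt_add_sum w hX'T' hT' hT'r
  rw [sum_insert fun hiX ↦ hiX' (hXX hiX)] at hS'w
  rw [sum_insert hiX'] at hTw
  linarith

/-- Diminishing differences (submodularity) of `X ↦ f_r(X)`: for independent `X ⊆ X'`,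
`i ∉ X'` with `X' ∪ {i}` independent and `|X' ∪ {i}| ≤ r`, we have
`f_r(X) − f_r(X ∪ {i}) ≤ f_r(X') − f_r(X' ∪ {i})`. -/
theorem truncOpt_submodular
    {α : Type*} [DecidableEq α] [Fintype α] (M : Matroid α) (w : α → ℝ)
    (hw : ∀ e, 0 ≤ w e) (r : ℕ)
    (X X' : Finset α) (hXX : X ⊆ X') (hX : M.Indep ↑X) (hX' : M.Indep ↑X')
    (i : α) (hiX' : i ∉ X') (hX'i : M.Indep ↑(insert i X'))
    (hcard : (insert i X').card ≤ r) :
    truncOpt M w r X - truncOpt M w r (insert i X) ≤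
      truncOpt M w r X' - truncOpt M w r (insert i X') :=
  truncOpt_submodular_general M w r X X' hXX i hiX' hX'i hcard
end

section
/- Let X ⊆ X' with X, X' ∈ 𝓘, let i ∉ X' be such that X' ∪ {i} ∈ 𝓘, and let r' ≤ r be natural numbers with |X' ∪ {i}| ≤ r'. Then f_r(X) − f_r(X ∪ {i}) ≤ f_{r'}(X') − f_{r'}(X' ∪ {i}). (Consequently, the trade prices p_{i,j}(X, r) used in the strongly budget-balanced matroid mechanism, which are proportional to the expectation of f_r(X) − f_r(X ∪ {i}) plus a term independent of X and r, are non-decreasing as X grows and r shrinks.) -/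
open Finset

/-!
Write `f_r(X) = w(A) - w(X)` for an independent `A ⊇ X` of size at most `r`, and likewise
`f_{r'}(insert i X')` with `insert i D ⊇ insert i X'`, where `i ∉ D`. Since `X ⊆ A ∩ D`, it suffices to redistribute the elements of `A`, `D`
and `i` into an `A' ⊇ insert i (A ∩ D)` feasible at rank `r` and a `D' ⊇ D` feasible at rank
`r'`, without changing the total weight. If `i ∈ A`, move `i` to `D`; if `insert i A` is
independent of size at most `r`, add `i` to `A`. Otherwise some `e ∈ A \ D` can be moved from
`A` to `D` while `i` enters `A`: when `insert i A` is dependent, take `e` in the fundamental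
circuit of `i` outside the closure of `D`; when `|A| = r > |D|`, take `e` by augmentation.
-/

namespace Matroid

variable {α : Type*} {M : Matroid α}

theorem Indep.exists_exchange_of_dep_insert {A D : Set α} {i : α} (hA : M.Indep A)
    (hD : M.Indep (insert i D)) (hiD : i ∉ D) (hAi : M.Dep (insert i A)) :
    ∃ e ∈ A \ D, M.Indep (insert e D) ∧ M.Indep (insert i A \ {e}) := by
  obtain ⟨hicl, hiA⟩ := hA.insert_dep_iff.mp hAi
  have hC := hA.fundCircuit_isCircuit hicl hiA
  have hD' : M.Indep D := hD.subset (Set.subset_insert i D)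
  have hiclD : i ∉ M.closure D := ((hD'.insert_indep_iff_of_notMem hiD).mp hD).2
  obtain ⟨e, heC, heclD⟩ := Set.not_subset.mp fun hsub ↦
    hiclD (M.closure_subset_closure_of_subset_closure hsub
      (hC.mem_closure_sdiff_singleton_of_mem (M.mem_fundCircuit i A)))
  have heA : e ∈ A := (M.fundCircuit_subset_insert i A heC.1).resolve_left heC.2
  have heD : e ∉ D := fun h ↦ heclD (M.subset_closure D hD'.subset_ground h)
  exact ⟨e, ⟨heA, heD⟩,
    (hD'.insert_indep_iff_of_notMem heD).mpr ⟨hC.subset_ground heC.1, heclD⟩,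
    (hA.mem_fundCircuit_iff hicl hiA).mp heC.1⟩

variable [DecidableEq α]

theorem Indep.exists_exchange_finset {r : ℕ} {A D : Finset α} {i : α} (hA : M.Indep ↑A)
    (hD : M.Indep ↑(insert i D)) (hiD : i ∉ D) (hDr : D.card < r)
    (hAi_fits : ¬ (M.Indep ↑(insert i A) ∧ A.card < r)) :
    ∃ e ∈ A, e ∉ D ∧ M.Indep ↑(insert e D) ∧ M.Indep ↑((insert i A).erase e) := by
  simp only [coe_insert, coe_erase] at hD hAi_fits ⊢
  by_cases hAi : M.Indep (insert i ↑A)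
  · have hDA : D.card < A.card := hDr.trans_le (not_lt.mp (hAi_fits ⟨hAi, ·⟩))
    obtain ⟨e, heA, heD, heDi⟩ := (hD.subset (Set.subset_insert i _)).augment_finset hA hDA
    exact ⟨e, heA, heD, heDi, hAi.subset Set.sdiff_subset⟩
  · have hiE : i ∈ M.E := hD.subset_ground (Set.mem_insert i _)
    have hAi_dep := (not_indep_iff (Set.insert_subset hiE hA.subset_ground)).mp hAi
    obtain ⟨e, ⟨heA, heD⟩, heDi, hAe⟩ :=
      hA.exists_exchange_of_dep_insert hD (by simpa using hiD) hAi_dep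
    exact ⟨e, heA, heD, heDi, hAe⟩

theorem Indep.exists_exchange_sum_eq {β : Type*} [AddCommMonoid β] (w : α → β) {r : ℕ}
    {A D : Finset α} {i : α} (hA : M.Indep ↑A) (hAr : A.card ≤ r)
    (hD : M.Indep ↑(insert i D)) (hiD : i ∉ D) (hDr : (insert i D).card ≤ r) :
    ∃ A' D' : Finset α, insert i (A ∩ D) ⊆ A' ∧ M.Indep ↑A' ∧ A'.card ≤ r ∧
      D ⊆ D' ∧ M.Indep ↑D' ∧ D'.card ≤ (insert i D).card ∧
      ∑ e ∈ A', w e + ∑ e ∈ D', w e = ∑ e ∈ A, w e + ∑ e ∈ D, w e + w i := by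
  rw [card_insert_of_notMem hiD] at hDr
  by_cases hiA : i ∈ A
  · refine ⟨A, insert i D, insert_subset hiA inter_subset_left, hA, hAr, subset_insert i D, hD,
      le_rfl, ?_⟩
    rw [sum_insert hiD, add_comm (w i), add_assoc]
  by_cases hAi_fits : M.Indep ↑(insert i A) ∧ A.card < r
  · refine ⟨insert i A, D, insert_subset_insert i inter_subset_left, hAi_fits.1, ?_,
      Subset.rfl, hD.subset (by simp), card_le_card (subset_insert i D), ?_⟩
    · rw [card_insert_of_notMem hiA]; exact hAi_fits.2
    · rw [sum_insert hiA, add_comm (w i), add_right_comm]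
  obtain ⟨e, heA, heD, heDi, hAe⟩ :=
    hA.exists_exchange_finset hD hiD (by omega) hAi_fits
  have hei : e ≠ i := fun h ↦ hiA (h ▸ heA)
  refine ⟨(insert i A).erase e, insert e D, ?_, hAe, ?_, subset_insert e D, heDi, ?_, ?_⟩
  · intro x hx
    rw [mem_erase, mem_insert]
    rcases mem_insert.mp hx with rfl | hx
    · exact ⟨hei.symm, .inl rfl⟩
    · exact ⟨fun h ↦ heD (h ▸ (mem_inter.mp hx).2), .inr (mem_inter.mp hx).1⟩
  · rw [card_erase_of_mem (mem_insert_of_mem heA), card_insert_of_notMem hiA]; omega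
  · rw [card_insert_of_notMem heD, card_insert_of_notMem hiD]
  · rw [sum_insert heD, ← add_assoc, sum_erase_add _ _ (mem_insert_of_mem heA),
      sum_insert hiA, add_comm (w i), add_right_comm]

end Matroid

section truncOpt

variable {α : Type*} [DecidableEq α] [Fintype α] (M : Matroid α) (w : α → ℝ)

theorem truncOpt_values_finite (r : ℕ) (X : Finset α) :
    {t : ℝ | ∃ Y : Finset α, MatroidFeasible M r X Y ∧ t = ∑ e ∈ Y, w e}.Finite :=
  (Set.finite_range fun Y : Finset α ↦ ∑ e ∈ Y, w e).subset fun _ ⟨Y, _, hY⟩ ↦ ⟨Y, hY.symm⟩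

variable {r : ℕ} {X B : Finset α}

theorem sum_sub_sum_le_truncOpt (hXB : X ⊆ B) (hB : M.Indep ↑B) (hBr : B.card ≤ r) :
    ∑ e ∈ B, w e - ∑ e ∈ X, w e ≤ truncOpt M w r X := by
  have hfeas : MatroidFeasible M r X (B \ X) := by
    refine ⟨disjoint_sdiff, ?_, ?_⟩ <;> rwa [union_sdiff_of_subset hXB]
  rw [← sum_sdiff hXB, add_sub_cancel_right]
  exact le_csSup (truncOpt_values_finite M w r X).bddAbove ⟨B \ X, hfeas, rfl⟩

theorem exists_superset_truncOpt_eq (hX : M.Indep ↑X) (hXr : X.card ≤ r) :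
    ∃ B, X ⊆ B ∧ M.Indep ↑B ∧ B.card ≤ r ∧
      truncOpt M w r X = ∑ e ∈ B, w e - ∑ e ∈ X, w e := by
  have hempty : MatroidFeasible M r X ∅ := by simpa [MatroidFeasible] using ⟨hX, hXr⟩
  obtain ⟨Y, ⟨hXY, hXYi, hXYr⟩, hY⟩ :
      truncOpt M w r X ∈ {t : ℝ | ∃ Y, MatroidFeasible M r X Y ∧ t = ∑ e ∈ Y, w e} :=
    Set.Nonempty.csSup_mem ⟨0, ∅, hempty, by simp⟩ (truncOpt_values_finite M w r X)
  refine ⟨X ∪ Y, subset_union_left, hXYi, hXYr, ?_⟩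
  rw [sum_union hXY, add_sub_cancel_left]
  exact hY

end truncOpt

theorem truncOpt_marginal_loss_mono_general
    {α : Type*} [DecidableEq α] [Fintype α] (M : Matroid α) (w : α → ℝ)
    (r r' : ℕ) (hrr : r' ≤ r)
    (X X' : Finset α) (hXX : X ⊆ X') (hX : M.Indep ↑X)
    (i : α) (hiX' : i ∉ X') (hX'i : M.Indep ↑(insert i X'))
    (hcard : (insert i X').card ≤ r') :
    truncOpt M w r X - truncOpt M w r (insert i X) ≤
      truncOpt M w r' X' - truncOpt M w r' (insert i X') := by
  have hX'r : X'.card < r' := by rwa [card_insert_of_notMem hiX', Nat.add_one_le_iff] at hcard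
  obtain ⟨A, hXA, hA, hAr, hfX⟩ :=
    exists_superset_truncOpt_eq M w (r := r) hX (by have := card_le_card hXX; omega)
  obtain ⟨D₁, hXD₁, hD₁, hD₁r, hfX'i⟩ := exists_superset_truncOpt_eq M w hX'i hcard
  obtain ⟨D, hiD, rfl⟩ : ∃ D, i ∉ D ∧ D₁ = insert i D :=
    ⟨D₁.erase i, notMem_erase i D₁, (insert_erase (hXD₁ (mem_insert_self i X'))).symm⟩
  have hX'D : X' ⊆ D := (subset_insert_iff_of_notMem hiX').mp ((subset_insert i X').trans hXD₁)
  obtain ⟨A', D', hA'sub, hA', hA'r, hDD', hD', hD'r, hsum⟩ :=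
    hA.exists_exchange_sum_eq w hAr hD₁ hiD (hD₁r.trans hrr)
  have hA'f := sum_sub_sum_le_truncOpt M w
    ((insert_subset_insert i (subset_inter hXA (hXX.trans hX'D))).trans hA'sub) hA' hA'r
  have hD'f := sum_sub_sum_le_truncOpt M w (hX'D.trans hDD') hD' (hD'r.trans hD₁r)
  rw [sum_insert (fun h ↦ hiX' (hXX h))] at hA'f
  rw [sum_insert hiX', sum_insert hiD] at hfX'i
  linarith

/-- Monotonicity of the marginal loss both in the contracted set and in the rank:
for independent `X ⊆ X'`, `i ∉ X'` with `X' ∪ {i}` independent and `|X' ∪ {i}| ≤ r' ≤ r`,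
we have `f_r(X) − f_r(X ∪ {i}) ≤ f_{r'}(X') − f_{r'}(X' ∪ {i})`.  (Hence the trade prices
of the strongly budget-balanced matroid mechanism are non-decreasing as `X` grows and `r`
shrinks.) -/
theorem truncOpt_marginal_loss_mono
    {α : Type*} [DecidableEq α] [Fintype α] (M : Matroid α) (w : α → ℝ)
    (hw : ∀ e, 0 ≤ w e) (r r' : ℕ) (hrr : r' ≤ r)
    (X X' : Finset α) (hXX : X ⊆ X') (hX : M.Indep ↑X) (hX' : M.Indep ↑X')
    (i : α) (hiX' : i ∉ X') (hX'i : M.Indep ↑(insert i X'))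
    (hcard : (insert i X').card ≤ r') :
    truncOpt M w r X - truncOpt M w r (insert i X) ≤
      truncOpt M w r' X' - truncOpt M w r' (insert i X') :=
  truncOpt_marginal_loss_mono_general M w r r' hrr X X' hXX hX i hiX' hX'i hcard
end

section
/- Let X ∈ 𝓘 and i ∉ X be such that X ∪ {i} ∈ 𝓘 and |X ∪ {i}| ≤ r. Then there exist a set Y_1 feasible for (X, r) with w(Y_1) = f_r(X) and a set Y_2 ⊆ Y_1 feasible for (X ∪ {i}, r) with w(Y_2) = f_{r}(X ∪ {i}) such that |Y_1 \ Y_2| ≤ 1. (Contracting one additional element removes at most one element from a maximum-weight basis of the contracted, truncated matroid, so f_r(X) − f_r(X ∪ {i}) equals the weight of at most one element of Y_1.) -/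
open Finset

/-!
Take `Y₂` optimal for `insert i X`, and let `Y₁ = insert g Y₂` for a heaviest `g` keeping
`insert g Y₂` feasible for `X` (`g = i` is a candidate). To see that `Y₁` is optimal for `X`,
take any `B` feasible for `X`, extend `X ∪ B` and `insert i X ∪ Y₂` to independent sets `P`, `Q`
of equal size at most `r`, and exchange `i ∈ Q` symmetrically against some `f ∈ P`: then
`P - f + i` gives a set feasible for `insert i X` covering `B - f`, and `Q - i + f` shows that
`f` is a candidate, so `w(B) ≤ w(f) + w(Y₂) ≤ w(g) + w(Y₂)`. Non-negativity of `w` is what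
allows `B` to be enlarged to `P \ X`.
-/

namespace Matroid

variable {α : Type*} {M : Matroid α}

theorem Indep.exists_symm_exchange {I J : Set α} {e : α} (hI : M.Indep I) (hJ : M.Indep J)
    (hIJ : I.encard = J.encard) (hJfin : J.Finite) (he : e ∈ J \ I) :
    ∃ f ∈ I \ J, M.Indep (insert e (I \ {f})) ∧ M.Indep (insert f (J \ {e})) := by
  obtain ⟨heJ, heI⟩ := he
  have hJe : M.Indep (J \ {e}) := hJ.sdiff _
  by_cases hecl : e ∈ M.closure I
  · have hC := hI.fundCircuit_isCircuit hecl heI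
    obtain ⟨f, ⟨hfC, hfe⟩, hfcl⟩ : ∃ f ∈ M.fundCircuit e I \ {e}, f ∉ M.closure (J \ {e}) := by
      by_contra! h
      exact hJ.notMem_closure_sdiff_of_mem heJ <| M.closure_subset_closure_of_subset_closure h <|
        hC.mem_closure_sdiff_singleton_of_mem (M.mem_fundCircuit e I)
    have hfI : f ∈ I := (M.fundCircuit_subset_insert e I hfC).resolve_left hfe
    have hfJe : f ∉ J \ {e} := fun hf ↦ hfcl (M.mem_closure_of_mem hf hJe.subset_ground)
    refine ⟨f, ⟨hfI, fun hfJ ↦ hfJe ⟨hfJ, hfe⟩⟩, ?_,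
      (hJe.insert_indep_iff_of_notMem hfJe).2 ⟨hI.subset_ground hfI, hfcl⟩⟩
    rw [Set.insert_sdiff_singleton_comm (Ne.symm hfe)]
    exact (hI.mem_fundCircuit_iff hecl heI).1 hfC
  · have hIe : M.Indep (insert e I) :=
      (hI.insert_indep_iff_of_notMem heI).2 ⟨hJ.subset_ground heJ, hecl⟩
    obtain ⟨f, ⟨hfI, hfJe⟩, hJf⟩ := hJe.augment hI <| hIJ ▸
      hJfin.sdiff.encard_lt_encard (Set.sdiff_singleton_ssubset.2 heJ)
    have hfe : f ≠ e := fun h ↦ heI (h ▸ hfI)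
    exact ⟨f, ⟨hfI, fun hfJ ↦ hfJe ⟨hfJ, hfe⟩⟩,
      hIe.subset (Set.insert_subset_insert Set.sdiff_subset), hJf⟩

theorem Indep.exists_superset_card_eq {I J : Finset α} (hI : M.Indep I) (hJ : M.Indep J)
    (hIJ : I.card ≤ J.card) : ∃ I' : Finset α, I ⊆ I' ∧ M.Indep I' ∧ I'.card = J.card := by
  classical
  induction hk : J.card - I.card generalizing I with
  | zero => exact ⟨I, subset_rfl, hI, by omega⟩
  | succ k ih =>
    obtain ⟨e, -, heI, hIe⟩ := hI.augment_finset hJ (by omega)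
    obtain ⟨I', hII', hI', hcard⟩ := ih (I := insert e I) (by simpa using hIe)
      (by rw [card_insert_of_notMem heI]; omega) (by rw [card_insert_of_notMem heI]; omega)
    exact ⟨I', (subset_insert e I).trans hII', hI', hcard⟩

end Matroid

section Feasible

variable {α : Type*} [DecidableEq α] {M : Matroid α} {r : ℕ} {X Y : Finset α} {i : α}

theorem matroidFeasible_of_union_subset {S : Finset α} (hXY : Disjoint X Y) (hS : X ∪ Y ⊆ S)
    (hSind : M.Indep S) (hSr : S.card ≤ r) : MatroidFeasible M r X Y :=
  ⟨hXY, hSind.subset (by exact_mod_cast hS), (card_le_card hS).trans hSr⟩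

theorem MatroidFeasible.insert_right_of_insert_left (h : MatroidFeasible M r (insert i X) Y)
    (hiX : i ∉ X) : i ∉ Y ∧ MatroidFeasible M r X (insert i Y) := by
  obtain ⟨hdisj, hind, hcard⟩ := h
  rw [disjoint_insert_left] at hdisj
  rw [insert_union, ← union_insert] at hind hcard
  exact ⟨hdisj.1, disjoint_insert_right.2 ⟨hiX, hdisj.2⟩, hind, hcard⟩

theorem MatroidFeasible.exists_exchange {B : Finset α} (hB : MatroidFeasible M r X B)
    (hY : MatroidFeasible M r (insert i X) Y) (hiX : i ∉ X) :
    ∃ f Z, MatroidFeasible M r (insert i X) Z ∧ f ∉ Z ∧ B ⊆ insert f Z ∧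
      f ∉ Y ∧ MatroidFeasible M r X (insert f Y) := by
  obtain ⟨hXB, hXBind, hXBr⟩ := hB
  obtain ⟨hXY, hXYind, hXYr⟩ := hY
  obtain ⟨P, Q, hP, hQ, hPQ, hPr, hXBP, hXYQ⟩ : ∃ P Q : Finset α, M.Indep P ∧ M.Indep Q ∧
      P.card = Q.card ∧ P.card ≤ r ∧ X ∪ B ⊆ P ∧ insert i X ∪ Y ⊆ Q := by
    rcases le_total (X ∪ B).card (insert i X ∪ Y).card with hle | hle
    · obtain ⟨P, hXBP, hP, hPQ⟩ := hXBind.exists_superset_card_eq hXYind hle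
      exact ⟨P, _, hP, hXYind, hPQ, hPQ ▸ hXYr, hXBP, subset_rfl⟩
    · obtain ⟨Q, hXYQ, hQ, hPQ⟩ := hXYind.exists_superset_card_eq hXBind hle
      exact ⟨_, Q, hXBind, hQ, hPQ.symm, hXBr, subset_rfl, hXYQ⟩
  have hiQ : i ∈ Q := hXYQ (by simp)
  -- if `i ∈ P` then `f = i` is forced, or `i` would lie both in `insert i X` and in `Z`
  obtain ⟨f, hfP, hfQ, hiPf, hPf, hQf⟩ : ∃ f ∈ P, f ∉ Q.erase i ∧ (i ∈ P → f = i) ∧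
      M.Indep ↑(insert i (P.erase f)) ∧ M.Indep ↑(insert f (Q.erase i)) := by
    by_cases hiP : i ∈ P
    · exact ⟨i, hiP, by simp, fun _ ↦ rfl, by simpa [hiP], by simpa [hiQ]⟩
    · obtain ⟨f, ⟨hfP, hfQ⟩, hPf, hQf⟩ :=
        hP.exists_symm_exchange hQ (by simp [hPQ]) Q.finite_toSet ⟨hiQ, hiP⟩
      exact ⟨f, hfP, fun h ↦ hfQ (mem_of_mem_erase h), fun h ↦ (hiP h).elim,
        by simpa using hPf, by simpa using hQf⟩
  have hcard_le (a b : α) (S : Finset α) (hb : b ∈ S) : (insert a (S.erase b)).card ≤ S.card :=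
    (card_insert_le _ _).trans_eq (card_erase_add_one hb)
  refine ⟨f, P.erase f \ X, ?_, by simp, ?_, fun hfY ↦ hfQ ?_, ?_⟩
  · refine matroidFeasible_of_union_subset ?_ ?_ hPf ((hcard_le i f P hfP).trans hPr)
    · grind [disjoint_left]
    · grind
  · grind [disjoint_left]
  · grind [disjoint_left]
  · refine matroidFeasible_of_union_subset ?_ ?_ hQf ((hcard_le f i Q hiQ).trans (hPQ ▸ hPr))
    · grind [disjoint_left]
    · grind

variable {w : α → ℝ}

theorem exists_matroidFeasible_forall_sum_le [Fintype α] (h₀ : MatroidFeasible M r X ∅) :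
    ∃ Y, MatroidFeasible M r X Y ∧
      ∀ Z, MatroidFeasible M r X Z → ∑ e ∈ Z, w e ≤ ∑ e ∈ Y, w e := by
  classical
  obtain ⟨Y, hY, hmax⟩ :=
    exists_max_image (univ.filter (MatroidFeasible M r X)) (fun Y ↦ ∑ e ∈ Y, w e)
      ⟨∅, by simpa using h₀⟩
  exact ⟨Y, (mem_filter.1 hY).2, fun Z hZ ↦ hmax Z (by simpa)⟩

theorem MatroidFeasible.sum_eq_truncOpt (hY : MatroidFeasible M r X Y)
    (hmax : ∀ Z, MatroidFeasible M r X Z → ∑ e ∈ Z, w e ≤ ∑ e ∈ Y, w e) :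
    ∑ e ∈ Y, w e = truncOpt M w r X := by
  refine (IsGreatest.csSup_eq ?_).symm
  refine ⟨⟨Y, hY, rfl⟩, ?_⟩
  rintro _ ⟨Z, hZ, rfl⟩
  exact hmax Z hZ

end Feasible

theorem truncOpt_contract_removes_at_most_one_general
    {α : Type*} [DecidableEq α] [Fintype α] (M : Matroid α) (w : α → ℝ)
    (hw : ∀ e, 0 ≤ w e) (r : ℕ)
    (X : Finset α) (i : α) (hiX : i ∉ X)
    (hXi : M.Indep ↑(insert i X))
    (hcard : (insert i X).card ≤ r) :
    ∃ Y₁ Y₂ : Finset α,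
      MatroidFeasible M r X Y₁ ∧ (∑ e ∈ Y₁, w e) = truncOpt M w r X ∧
      Y₂ ⊆ Y₁ ∧
      MatroidFeasible M r (insert i X) Y₂ ∧
      (∑ e ∈ Y₂, w e) = truncOpt M w r (insert i X) ∧
      (Y₁ \ Y₂).card ≤ 1 := by
  classical
  have h₀ : MatroidFeasible M r (insert i X) ∅ :=
    ⟨disjoint_empty_right _, by simpa using hXi, by simpa using hcard⟩
  obtain ⟨Y₂, hY₂, hY₂max⟩ := exists_matroidFeasible_forall_sum_le (w := w) h₀
  obtain ⟨g, hg, hg_max⟩ :=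
    exists_max_image (univ.filter fun f ↦ f ∉ Y₂ ∧ MatroidFeasible M r X (insert f Y₂)) w
      ⟨i, by simpa using hY₂.insert_right_of_insert_left hiX⟩
  obtain ⟨hgY₂, hY₁⟩ := (mem_filter.1 hg).2
  refine ⟨insert g Y₂, Y₂, hY₁, hY₁.sum_eq_truncOpt fun B hB ↦ ?_, subset_insert g Y₂, hY₂,
    hY₂.sum_eq_truncOpt hY₂max, by simp [hgY₂]⟩
  obtain ⟨f, Z, hZ, hfZ, hBZ, hfY₂, hfeas⟩ := hB.exists_exchange hY₂ hiX
  calc ∑ e ∈ B, w e ≤ ∑ e ∈ insert f Z, w e := sum_le_sum_of_subset_of_nonneg hBZ fun e _ _ ↦ hw e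
    _ = w f + ∑ e ∈ Z, w e := sum_insert hfZ
    _ ≤ w g + ∑ e ∈ Y₂, w e := add_le_add (hg_max f (by simp [hfY₂, hfeas])) (hY₂max Z hZ)
    _ = ∑ e ∈ insert g Y₂, w e := (sum_insert hgY₂).symm

/-- Contracting one additional element removes at most one element from a maximum-weight
basis of the contracted, truncated matroid: for independent `X`, `i ∉ X` with `X ∪ {i}`
independent and `|X ∪ {i}| ≤ r`, there are `Y₁` feasible for `(X, r)` attaining `f_r(X)`
and `Y₂ ⊆ Y₁` feasible for `(X ∪ {i}, r)` attaining `f_r(X ∪ {i})` with `|Y₁ \ Y₂| ≤ 1`. -/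
theorem truncOpt_contract_removes_at_most_one
    {α : Type*} [DecidableEq α] [Fintype α] (M : Matroid α) (w : α → ℝ)
    (hw : ∀ e, 0 ≤ w e) (r : ℕ)
    (X : Finset α) (i : α) (hiX : i ∉ X)
    (hX : M.Indep ↑X) (hXi : M.Indep ↑(insert i X))
    (hcard : (insert i X).card ≤ r) :
    ∃ Y₁ Y₂ : Finset α,
      MatroidFeasible M r X Y₁ ∧ (∑ e ∈ Y₁, w e) = truncOpt M w r X ∧
      Y₂ ⊆ Y₁ ∧
      MatroidFeasible M r (insert i X) Y₂ ∧
      (∑ e ∈ Y₂, w e) = truncOpt M w r (insert i X) ∧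
      (Y₁ \ Y₂).card ≤ 1 :=
  truncOpt_contract_removes_at_most_one_general M w hw r X i hiX hXi hcard
end

section
/- In the knapsack mechanism (Algorithm 1) with buyers sorted so that w_1 ≥ w_2 ≥ … ≥ w_n, truthful reporting is a dominant strategy for every seller: fix a seller j, her true value v_j, and arbitrary fixed values of all other agents; let u_j(x) be seller j's utility when she reports x (so every comparison of her value against an offered price in Algorithm 1 uses x), namely v_j if she ends the mechanism holding her item and p_i if her item is sold at price p_i. Then u_j(v_j) ≥ u_j(x) for every x ≥ 0. -/
open Finset MeasureTheory ProbabilityTheory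
open scoped Classical

/-- The state of Algorithm 1 (the knapsack double-auction mechanism).
Buyers are indexed by `Sum.inl i` (`i < n`), sellers by `Sum.inr j` (`j < k`).
* `A` is the set of agents who were irrevocably allocated an item during the while-loop,
* `i`/`j` are the current buyer/seller indices,
* `W` is the total artificial weight of the irrevocably allocated items,
* `P a` is the price of the iteration in which agent `a` was added to `A`,
* `sold j` is the price at which seller `j`'s item was sold (if it was sold). -/
structure KnapState where
  A : Finset (ℕ ⊕ ℕ)
  i : ℕ
  j : ℕ
  W : ℝ
  P : ℕ ⊕ ℕ → ℝ
  sold : ℕ → ℝ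

/-- One pass of the while-loop of Algorithm 1 with the given amount of `fuel`. -/
noncomputable def knapStep (n k : ℕ) (wstar p vB vS : ℕ → ℝ) :
    ℕ → KnapState → KnapState
  | 0, s => s
  | (fuel + 1), s =>
    if s.i < n ∧ s.j < k then
      if 1 < s.W + wstar s.i then
        knapStep n k wstar p vB vS fuel { s with i := s.i + 1 }
      else if p s.i ≤ vS s.j then
        knapStep n k wstar p vB vS fuel
          { s with A := insert (Sum.inr s.j) s.A, W := s.W + wstar s.i, j := s.j + 1,
                   P := Function.update s.P (Sum.inr s.j) (p s.i) }
      else if p s.i ≤ vB s.i then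
        knapStep n k wstar p vB vS fuel
          { s with A := insert (Sum.inl s.i) s.A, W := s.W + wstar s.i,
                   i := s.i + 1, j := s.j + 1,
                   P := Function.update s.P (Sum.inl s.i) (p s.i),
                   sold := Function.update s.sold s.j (p s.i) }
      else
        knapStep n k wstar p vB vS fuel { s with i := s.i + 1 }
    else s

/-- The final state of the while-loop of Algorithm 1 (fuel `n + k` suffices since every
iteration increases `i` or `j`). -/
noncomputable def knapRun (n k : ℕ) (wstar p vB vS : ℕ → ℝ) : KnapState :=
  knapStep n k wstar p vB vS (n + k)
    { A := ∅, i := 0, j := 0, W := 0, P := fun _ => 0, sold := fun _ => 0 }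

/-- The set `A` of agents holding an item after Algorithm 1: the agents allocated during the
while-loop together with all remaining sellers `j' ≥ j`, who keep their items. -/
noncomputable def knapFinalA (n k : ℕ) (wstar p vB vS : ℕ → ℝ) : Finset (ℕ ⊕ ℕ) :=
  (knapRun n k wstar p vB vS).A ∪
    ((Finset.range k).filter (fun j' => (knapRun n k wstar p vB vS).j ≤ j')).image Sum.inr

/-- `OPT(v)`: the maximum of `∑_{a ∈ A} v_a` over all sets `A` of buyers (`Sum.inl i`, `i < n`)
and sellers (`Sum.inr j`, `j < k`) with `|A| ≤ k` whose buyers satisfy the knapsack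
constraint `∑ w_i ≤ 1`. -/
noncomputable def knapOPT (n k : ℕ) (w : ℕ → ℝ) (vB vS : ℕ → ℝ) : ℝ :=
  sSup {t : ℝ | ∃ A : Finset (ℕ ⊕ ℕ),
    (∀ a ∈ A, Sum.elim (fun i => i < n) (fun j => j < k) a) ∧
    A.card ≤ k ∧
    (∑ a ∈ A, Sum.elim w (fun _ => (0 : ℝ)) a) ≤ 1 ∧
    t = ∑ a ∈ A, Sum.elim vB vS a}

/-!
Once the loop reaches seller `j0`, it offers her the prices `p i` of the remaining buyers in
turn, and these are non-increasing because `E[OPT] ≥ 0` and the weights are sorted. At each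
offer her report only decides whether she keeps her item (utility `v`) or lets the buyer take
it if he accepts (utility `p i`). Reporting `v` sells only at prices above `v` and keeps the
item at the first offer not above `v`, after which no better offer can come; so no report does
better. Before the loop reaches `j0` her report plays no role.
-/

namespace KnapState

@[simps]
def skip (s : KnapState) : KnapState := { s with i := s.i + 1 }

@[simps]
noncomputable def keep (wstar p : ℕ → ℝ) (s : KnapState) : KnapState :=
  { s with A := insert (Sum.inr s.j) s.A, W := s.W + wstar s.i, j := s.j + 1,
           P := Function.update s.P (Sum.inr s.j) (p s.i) }

@[simps]
noncomputable def buy (wstar p : ℕ → ℝ) (s : KnapState) : KnapState :=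
  { s with A := insert (Sum.inl s.i) s.A, W := s.W + wstar s.i,
           i := s.i + 1, j := s.j + 1,
           P := Function.update s.P (Sum.inl s.i) (p s.i),
           sold := Function.update s.sold s.j (p s.i) }

/-- Seller `j0`'s utility at true value `v`, read off the final loop state; sellers
`j ≥ f.j` were never reached by the loop and keep their item. -/
noncomputable def sellerUtility (j0 : ℕ) (v : ℝ) (f : KnapState) : ℝ :=
  if Sum.inr j0 ∈ f.A ∨ f.j ≤ j0 then v else f.sold j0

end KnapState

open KnapState

section Loop

variable {n k : ℕ} {wstar p vB vS : ℕ → ℝ}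

theorem knapStep_succ (fuel : ℕ) (s : KnapState) :
    knapStep n k wstar p vB vS (fuel + 1) s =
      if s.i < n ∧ s.j < k then
        if 1 < s.W + wstar s.i then knapStep n k wstar p vB vS fuel s.skip
        else if p s.i ≤ vS s.j then knapStep n k wstar p vB vS fuel (s.keep wstar p)
        else if p s.i ≤ vB s.i then knapStep n k wstar p vB vS fuel (s.buy wstar p)
        else knapStep n k wstar p vB vS fuel s.skip
      else s := rfl

theorem knapStep_induction (P : KnapState → Prop) (hskip : ∀ s, P s → P s.skip)
    (hkeep : ∀ s, P s → P (s.keep wstar p)) (hbuy : ∀ s, P s → P (s.buy wstar p)) :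
    ∀ fuel s, P s → P (knapStep n k wstar p vB vS fuel s) := by
  intro fuel
  induction fuel with
  | zero => exact fun s hs => hs
  | succ m ih =>
    intro s hs
    rw [knapStep_succ]
    split_ifs
    exacts [ih _ (hskip s hs), ih _ (hkeep s hs), ih _ (hbuy s hs), ih _ (hskip s hs), hs]

theorem j_le_knapStep_j (fuel : ℕ) (s : KnapState) :
    s.j ≤ (knapStep n k wstar p vB vS fuel s).j :=
  knapStep_induction (fun t => s.j ≤ t.j) (fun _ h => h) (fun _ h => by simp; omega)
    (fun _ h => by simp; omega) fuel s le_rfl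

theorem mem_knapStep_A {a : ℕ ⊕ ℕ} (fuel : ℕ) {s : KnapState} (ha : a ∈ s.A) :
    a ∈ (knapStep n k wstar p vB vS fuel s).A :=
  knapStep_induction (fun t => a ∈ t.A) (fun _ h => h) (fun _ h => mem_insert_of_mem h)
    (fun _ h => mem_insert_of_mem h) fuel s ha

theorem knapStep_of_lt_j {j0 : ℕ} (fuel : ℕ) {s : KnapState} (hj : j0 < s.j) :
    (Sum.inr j0 ∈ (knapStep n k wstar p vB vS fuel s).A ↔ Sum.inr j0 ∈ s.A) ∧
      (knapStep n k wstar p vB vS fuel s).sold j0 = s.sold j0 := by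
  refine (knapStep_induction
    (fun t => j0 < t.j ∧ (Sum.inr j0 ∈ t.A ↔ Sum.inr j0 ∈ s.A) ∧ t.sold j0 = s.sold j0)
    (fun _ h => h) ?_ ?_ fuel s ⟨hj, Iff.rfl, rfl⟩).2
  · rintro t ⟨hj, hA, hsold⟩
    refine ⟨by simp; omega, ?_, hsold⟩
    simp [hA, hj.ne]
  · rintro t ⟨hj, hA, hsold⟩
    refine ⟨by simp; omega, by simp [hA], ?_⟩
    simp [Function.update_of_ne hj.ne, hsold]

theorem sellerUtility_knapStep_of_mem {j0 : ℕ} {v : ℝ} (fuel : ℕ) {s : KnapState}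
    (h : Sum.inr j0 ∈ s.A) :
    (knapStep n k wstar p vB vS fuel s).sellerUtility j0 v = v :=
  if_pos (Or.inl (mem_knapStep_A fuel h))

theorem sellerUtility_knapStep_keep {j0 : ℕ} {v : ℝ} (fuel : ℕ) {s : KnapState}
    (hj : s.j = j0) :
    (knapStep n k wstar p vB vS fuel (s.keep wstar p)).sellerUtility j0 v = v :=
  sellerUtility_knapStep_of_mem fuel (by simp [hj])

theorem sellerUtility_knapStep_buy {j0 : ℕ} {v : ℝ} (fuel : ℕ) {s : KnapState}
    (hj : s.j = j0) (hA : Sum.inr j0 ∉ s.A) :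
    (knapStep n k wstar p vB vS fuel (s.buy wstar p)).sellerUtility j0 v = p s.i := by
  have hj' : j0 < (s.buy wstar p).j := by simp; omega
  have hpast : j0 < (knapStep n k wstar p vB vS fuel (s.buy wstar p)).j :=
    hj'.trans_le (j_le_knapStep_j fuel _)
  have hA' : Sum.inr j0 ∉ (knapStep n k wstar p vB vS fuel (s.buy wstar p)).A := by
    rw [(knapStep_of_lt_j fuel hj').1]; simp [hA]
  rw [sellerUtility, if_neg (not_or.2 ⟨hA', by omega⟩), (knapStep_of_lt_j fuel hj').2]
  simp [← hj]

end Loop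

section Truthfulness

variable {n k : ℕ} {wstar p vB : ℕ → ℝ} {j0 : ℕ} {v : ℝ}

/-- A truthful seller sells only at a price above her value. -/
theorem le_sellerUtility_knapStep (vS : ℕ → ℝ) (hv : vS j0 = v) :
    ∀ fuel s, s.j ≤ j0 → Sum.inr j0 ∉ s.A →
      v ≤ (knapStep n k wstar p vB vS fuel s).sellerUtility j0 v := by
  intro fuel
  induction fuel with
  | zero => exact fun s hj _ => (if_pos (Or.inr hj)).ge
  | succ m ih =>
    intro s hj hA
    rw [knapStep_succ]
    split_ifs with _ _ hkeep
    · exact ih _ hj hA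
    · rcases hj.eq_or_lt with heq | hlt
      · exact (sellerUtility_knapStep_keep m heq).ge
      · exact ih _ (by simp; omega) (by simp [hA, hlt.ne'])
    · rcases hj.eq_or_lt with heq | hlt
      · rw [sellerUtility_knapStep_buy m heq hA]
        rw [heq, hv] at hkeep
        exact (not_le.mp hkeep).le
      · exact ih _ (by simp; omega) (by simp [hA])
    · exact ih _ hj hA
    · exact (if_pos (Or.inr hj)).ge

theorem sellerUtility_knapStep_le (vS : ℕ → ℝ) {c : ℝ} (hvc : v ≤ c) :
    ∀ fuel s, s.j = j0 → Sum.inr j0 ∉ s.A → (∀ i, s.i ≤ i → i < n → p i ≤ c) →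
      (knapStep n k wstar p vB vS fuel s).sellerUtility j0 v ≤ c := by
  intro fuel
  induction fuel with
  | zero => exact fun s hj _ _ => (if_pos (Or.inr hj.le)).trans_le hvc
  | succ m ih =>
    intro s hj hA hpc
    have hpc_skip : ∀ i, s.skip.i ≤ i → i < n → p i ≤ c :=
      fun i hi => hpc i (by simp at hi; omega)
    rw [knapStep_succ]
    split_ifs with hrun
    · exact ih _ hj hA hpc_skip
    · exact (sellerUtility_knapStep_keep m hj).trans_le hvc
    · exact (sellerUtility_knapStep_buy m hj hA).trans_le (hpc _ le_rfl hrun.1)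
    · exact ih _ hj hA hpc_skip
    · exact (if_pos (Or.inr hj.le)).trans_le hvc

theorem sellerUtility_knapStep_le_of_j_eq (hp : AntitoneOn p (Set.Iio n))
    (vx vv : ℕ → ℝ) (hv : vv j0 = v) :
    ∀ fuel s, s.j = j0 → Sum.inr j0 ∉ s.A →
      (knapStep n k wstar p vB vx fuel s).sellerUtility j0 v ≤
        (knapStep n k wstar p vB vv fuel s).sellerUtility j0 v := by
  intro fuel
  induction fuel with
  | zero => exact fun _ _ _ => le_rfl
  | succ m ih =>
    intro s hj hA
    have htrue : v ≤ (knapStep n k wstar p vB vv (m + 1) s).sellerUtility j0 v :=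
      le_sellerUtility_knapStep vv hv _ s hj.le hA
    rw [knapStep_succ] at htrue
    rw [knapStep_succ, knapStep_succ]
    by_cases hrun : s.i < n ∧ s.j < k
    swap
    · simp only [if_neg hrun, le_rfl]
    by_cases hW : 1 < s.W + wstar s.i
    · simp only [if_pos hrun, if_pos hW]
      exact ih _ hj hA
    simp only [if_pos hrun, if_neg hW] at htrue ⊢
    simp only [hj, hv] at htrue ⊢
    by_cases hxp : p s.i ≤ vx j0
    · rwa [if_pos hxp, sellerUtility_knapStep_keep m hj]
    rw [if_neg hxp]
    by_cases hvp : p s.i ≤ v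
    · rw [if_pos hvp, sellerUtility_knapStep_keep m hj]
      split_ifs
      · rwa [sellerUtility_knapStep_buy m hj hA]
      · -- every later offer is at most `p s.i ≤ v`
        refine sellerUtility_knapStep_le vx le_rfl m _ hj hA fun i hi hin => ?_
        exact (hp hrun.1 hin (by simp at hi; omega)).trans hvp
    · rw [if_neg hvp]
      split_ifs
      · rw [sellerUtility_knapStep_buy m hj hA, sellerUtility_knapStep_buy m hj hA]
      · exact ih _ hj hA

theorem sellerUtility_knapStep_le_truthful (hp : AntitoneOn p (Set.Iio n))
    (vx vv : ℕ → ℝ) (hv : vv j0 = v) (hagree : ∀ j ≠ j0, vx j = vv j) :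
    ∀ fuel s, s.j ≤ j0 → Sum.inr j0 ∉ s.A →
      (knapStep n k wstar p vB vx fuel s).sellerUtility j0 v ≤
        (knapStep n k wstar p vB vv fuel s).sellerUtility j0 v := by
  intro fuel
  induction fuel with
  | zero => exact fun _ _ _ => le_rfl
  | succ m ih =>
    intro s hj hA
    rcases hj.eq_or_lt with heq | hlt
    · exact sellerUtility_knapStep_le_of_j_eq hp vx vv hv (m + 1) s heq hA
    rw [knapStep_succ, knapStep_succ, hagree s.j hlt.ne]
    split_ifs
    · exact ih _ hj hA
    · exact ih _ (by simp; omega) (by simp [hA, hlt.ne'])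
    · exact ih _ (by simp; omega) (by simp [hA])
    · exact ih _ hj hA
    · exact le_rfl

end Truthfulness

theorem knapOPT_nonneg {n k : ℕ} {w vB vS : ℕ → ℝ} (hvB : ∀ i, 0 ≤ vB i)
    (hvS : ∀ j, 0 ≤ vS j) :
    0 ≤ knapOPT n k w vB vS :=
  Real.sSup_nonneg <| by
    rintro _ ⟨A, -, -, -, rfl⟩
    exact sum_nonneg fun a _ => by cases a <;> simp [hvB, hvS]

theorem mem_knapFinalA_inr_iff {n k j0 : ℕ} {wstar p vB vS : ℕ → ℝ} (hj0 : j0 < k) :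
    Sum.inr j0 ∈ knapFinalA n k wstar p vB vS ↔
      Sum.inr j0 ∈ (knapRun n k wstar p vB vS).A ∨ (knapRun n k wstar p vB vS).j ≤ j0 := by
  simp [knapFinalA, hj0]

theorem knapsack_mechanism_seller_truthful_general
    {Ω : Type*} [MeasurableSpace Ω] (μ : Measure Ω)
    (n k : ℕ)
    (w : ℕ → ℝ)
    (hsort : ∀ i j, i ≤ j → j < n → w j ≤ w i)
    (V : ℕ ⊕ ℕ → Ω → ℝ)
    (hnonneg : ∀ a ω, 0 ≤ V a ω)
    (wstar : ℕ → ℝ) (hwstar : ∀ i, wstar i = max (w i) (1 / (k : ℝ)))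
    (EOPT : ℝ)
    (hEOPT : EOPT =
      ∫ ω, knapOPT n k w (fun i => V (Sum.inl i) ω) (fun j => V (Sum.inr j) ω) ∂μ)
    (p : ℕ → ℝ) (hp : ∀ i, p i = (2 / 7) * wstar i * EOPT)
    -- the fixed (reported) values of all agents; `vS j0` is seller `j0`'s true value
    (vB vS : ℕ → ℝ)
    (j0 : ℕ) (hj0 : j0 < k)
    (u : ℝ → ℝ)
    (hu : ∀ x, u x =
      if Sum.inr j0 ∈ knapFinalA n k wstar p vB (Function.update vS j0 x) then vS j0
      else (knapRun n k wstar p vB (Function.update vS j0 x)).sold j0)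
    (x : ℝ) :
    u x ≤ u (vS j0) := by
  have hEOPT_nonneg : 0 ≤ EOPT := hEOPT ▸ integral_nonneg fun ω =>
    knapOPT_nonneg (fun i => hnonneg _ ω) (fun j => hnonneg _ ω)
  have hp_anti : AntitoneOn p (Set.Iio n) := fun i _ i' hi' hii' => by
    rw [hp, hp, hwstar, hwstar]
    gcongr
    exact hsort i i' hii' hi'
  have hu_run : ∀ y, u y =
      (knapRun n k wstar p vB (Function.update vS j0 y)).sellerUtility j0 (vS j0) := fun y => by
    simp only [hu, mem_knapFinalA_inr_iff hj0, sellerUtility]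
  rw [hu_run, hu_run]
  exact sellerUtility_knapStep_le_truthful hp_anti _ _ (Function.update_self _ _ _)
    (fun j hj => by simp [hj]) _ _ (Nat.zero_le _) (by simp)

/-- **Truthfulness for sellers in the knapsack mechanism (Algorithm 1).**
With buyers sorted so that `w_1 ≥ … ≥ w_n` and prices `p_i = (2/7) · w_i* · E[OPT]`,
fix a seller `j0`, her true value `vS j0`, and arbitrary fixed values of all other agents.
Let `u x` be seller `j0`'s utility when she reports `x` (every comparison of her value
against an offered price uses `x`): her true value `vS j0` if she ends the mechanism
holding her item, and the sale price otherwise.  Then `u (vS j0) ≥ u x` for all `x ≥ 0`. -/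
theorem knapsack_mechanism_seller_truthful
    {Ω : Type*} [MeasurableSpace Ω] (μ : Measure Ω) [IsProbabilityMeasure μ]
    (n k : ℕ) (hk : 2 ≤ k)
    (w : ℕ → ℝ) (hw0 : ∀ i, i < n → 0 ≤ w i) (hw2 : ∀ i, i < n → w i ≤ 1 / 2)
    (hsort : ∀ i j, i ≤ j → j < n → w j ≤ w i)
    (V : ℕ ⊕ ℕ → Ω → ℝ)
    (hmeas : ∀ a, Measurable (V a)) (hint : ∀ a, Integrable (V a) μ)
    (hnonneg : ∀ a ω, 0 ≤ V a ω)
    (hindep : iIndepFun V μ)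
    (wstar : ℕ → ℝ) (hwstar : ∀ i, wstar i = max (w i) (1 / (k : ℝ)))
    (EOPT : ℝ)
    (hEOPT : EOPT =
      ∫ ω, knapOPT n k w (fun i => V (Sum.inl i) ω) (fun j => V (Sum.inr j) ω) ∂μ)
    (p : ℕ → ℝ) (hp : ∀ i, p i = (2 / 7) * wstar i * EOPT)
    -- the fixed (reported) values of all agents; `vS j0` is seller `j0`'s true value
    (vB vS : ℕ → ℝ) (hvB : ∀ i, 0 ≤ vB i) (hvS : ∀ j, 0 ≤ vS j)
    (j0 : ℕ) (hj0 : j0 < k)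
    (u : ℝ → ℝ)
    (hu : ∀ x, u x =
      if Sum.inr j0 ∈ knapFinalA n k wstar p vB (Function.update vS j0 x) then vS j0
      else (knapRun n k wstar p vB (Function.update vS j0 x)).sold j0)
    (x : ℝ) (hx : 0 ≤ x) :
    u x ≤ u (vS j0) :=
  knapsack_mechanism_seller_truthful_general μ n k w hsort V hnonneg wstar hwstar EOPT hEOPT p hp vB
    vS j0 hj0 u hu x
end

section
/- For every valuation profile v, the set A returned by the knapsack mechanism (Algorithm 1) satisfies |A| = k (exactly k items are allocated) and the set of buyers in A satisfies the knapsack constraint ∑_{i ∈ A ∩ B} w_i ≤ ∑_{i ∈ A ∩ B} w_i* ≤ 1. -/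
open Finset MeasureTheory ProbabilityTheory
open scoped Classical

/-!
The while-loop keeps `|A| = j`, keeps every agent of `A` strictly below the current buyer and
seller indices, and keeps `∑_{i ∈ A ∩ B} w_i* ≤ W ≤ 1`, since it only allocates when
`W + w_i* ≤ 1`. The sellers `j, …, k - 1` added at the end are therefore new, bring `A` to
exactly `k` agents, and carry no buyer weight.
-/

def buyerWeight (f : ℕ → ℝ) (A : Finset (ℕ ⊕ ℕ)) : ℝ :=
  ∑ a ∈ A, Sum.elim f (fun _ => (0 : ℝ)) a

section buyerWeight

variable {f g : ℕ → ℝ} {A : Finset (ℕ ⊕ ℕ)}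

lemma buyerWeight_mono (hfg : ∀ i, f i ≤ g i) (A : Finset (ℕ ⊕ ℕ)) :
    buyerWeight f A ≤ buyerWeight g A :=
  Finset.sum_le_sum fun a _ => by cases a <;> simp [hfg]

@[simp] lemma buyerWeight_insert_inr (j : ℕ) :
    buyerWeight f (insert (Sum.inr j) A) = buyerWeight f A :=
  Finset.sum_insert_of_eq_zero_if_notMem fun _ => rfl

lemma buyerWeight_insert_inl {i : ℕ} (hi : Sum.inl i ∉ A) :
    buyerWeight f (insert (Sum.inl i) A) = f i + buyerWeight f A :=
  Finset.sum_insert hi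

lemma buyerWeight_union_image_inr (S : Finset ℕ) :
    buyerWeight f (A ∪ S.image Sum.inr) = buyerWeight f A := by
  refine (Finset.sum_subset Finset.subset_union_left fun a ha haA => ?_).symm
  obtain ⟨j, -, rfl⟩ := Finset.mem_image.mp ((Finset.mem_union.mp ha).resolve_left haA)
  rfl

end buyerWeight

def remainingSellers (k j : ℕ) : Finset (ℕ ⊕ ℕ) :=
  ((Finset.range k).filter (fun j' => j ≤ j')).image Sum.inr

lemma card_remainingSellers (k j : ℕ) : (remainingSellers k j).card = k - j := by
  rw [remainingSellers, Finset.card_image_of_injective _ Sum.inr_injective,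
    Finset.range_eq_Ico, Finset.Ico_filter_le, Nat.card_Ico, Nat.zero_max]

lemma Sum.elim_lt_mono {i i' j j' : ℕ} (hi : i ≤ i') (hj : j ≤ j') :
    ∀ a : ℕ ⊕ ℕ, Sum.elim (· < i) (· < j) a → Sum.elim (· < i') (· < j') a
  | .inl _, h => lt_of_lt_of_le h hi
  | .inr _, h => lt_of_lt_of_le h hj

namespace KnapState

structure Invariant (wstar : ℕ → ℝ) (k : ℕ) (s : KnapState) : Prop where
  card_A : s.A.card = s.j
  mem_A : ∀ a ∈ s.A, Sum.elim (· < s.i) (· < s.j) a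
  buyerWeight_le : buyerWeight wstar s.A ≤ s.W
  W_le_one : s.W ≤ 1
  j_le : s.j ≤ k

variable {wstar : ℕ → ℝ} {k : ℕ} {s : KnapState}

lemma Invariant.inl_notMem (h : s.Invariant wstar k) : Sum.inl s.i ∉ s.A :=
  fun hmem => lt_irrefl _ (h.mem_A _ hmem)

lemma Invariant.inr_notMem (h : s.Invariant wstar k) : Sum.inr s.j ∉ s.A :=
  fun hmem => lt_irrefl _ (h.mem_A _ hmem)

lemma Invariant.skipBuyer (h : s.Invariant wstar k) :
    ({ s with i := s.i + 1 } : KnapState).Invariant wstar k where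
  card_A := h.card_A
  mem_A a ha := Sum.elim_lt_mono (Nat.le_succ _) le_rfl a (h.mem_A a ha)
  buyerWeight_le := h.buyerWeight_le
  W_le_one := h.W_le_one
  j_le := h.j_le

lemma Invariant.sellerKeeps (h : s.Invariant wstar k) (hj : s.j < k)
    (hW : s.W + wstar s.i ≤ 1) (hw : 0 ≤ wstar s.i) (P : ℕ ⊕ ℕ → ℝ) :
    ({ s with A := insert (Sum.inr s.j) s.A, W := s.W + wstar s.i, j := s.j + 1, P := P } :
      KnapState).Invariant wstar k where
  card_A := by simp [Finset.card_insert_of_notMem h.inr_notMem, h.card_A]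
  mem_A a ha := by
    rcases Finset.mem_insert.mp ha with rfl | ha
    · exact Nat.lt_succ_self _
    · exact Sum.elim_lt_mono le_rfl (Nat.le_succ _) a (h.mem_A a ha)
  buyerWeight_le := by simpa using le_add_of_le_of_nonneg h.buyerWeight_le hw
  W_le_one := hW
  j_le := hj

lemma Invariant.sellToBuyer (h : s.Invariant wstar k) (hj : s.j < k)
    (hW : s.W + wstar s.i ≤ 1) (P : ℕ ⊕ ℕ → ℝ) (sold : ℕ → ℝ) :
    ({ s with A := insert (Sum.inl s.i) s.A, W := s.W + wstar s.i, i := s.i + 1,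
              j := s.j + 1, P := P, sold := sold } : KnapState).Invariant wstar k where
  card_A := by simp [Finset.card_insert_of_notMem h.inl_notMem, h.card_A]
  mem_A a ha := by
    rcases Finset.mem_insert.mp ha with rfl | ha
    · exact Nat.lt_succ_self _
    · exact Sum.elim_lt_mono (Nat.le_succ _) (Nat.le_succ _) a (h.mem_A a ha)
  buyerWeight_le := by
    simpa [buyerWeight_insert_inl h.inl_notMem, add_comm] using
      add_le_add_right h.buyerWeight_le (wstar s.i)
  W_le_one := hW
  j_le := hj

lemma Invariant.knapStep (hws : ∀ i, 0 ≤ wstar i) (n : ℕ) (p vB vS : ℕ → ℝ) :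
    ∀ fuel, s.Invariant wstar k → (knapStep n k wstar p vB vS fuel s).Invariant wstar k := by
  intro fuel
  induction fuel generalizing s with
  | zero => exact id
  | succ fuel ih =>
    intro h
    rw [_root_.knapStep]
    split_ifs with hloop hfull hkeep hbuy
    · exact ih h.skipBuyer
    · exact ih (h.sellerKeeps hloop.2 (not_lt.mp hfull) (hws _) _)
    · exact ih (h.sellToBuyer hloop.2 (not_lt.mp hfull) _ _)
    · exact ih h.skipBuyer
    · exact h

lemma Invariant.card_union_remainingSellers (h : s.Invariant wstar k) :
    (s.A ∪ remainingSellers k s.j).card = k := by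
  have hdisj : Disjoint s.A (remainingSellers k s.j) := by
    refine Finset.disjoint_left.mpr fun a ha haR => ?_
    obtain ⟨j, hj, rfl⟩ := Finset.mem_image.mp haR
    exact absurd (h.mem_A _ ha) (not_lt.mpr (Finset.mem_filter.mp hj).2)
  rw [Finset.card_union_of_disjoint hdisj, h.card_A, card_remainingSellers]
  exact Nat.add_sub_of_le h.j_le

end KnapState

lemma knapRun_invariant {wstar : ℕ → ℝ} (hws : ∀ i, 0 ≤ wstar i) (n k : ℕ) (p vB vS : ℕ → ℝ) :
    (knapRun n k wstar p vB vS).Invariant wstar k :=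
  KnapState.Invariant.knapStep hws n p vB vS _
    { card_A := rfl, mem_A := by simp, buyerWeight_le := le_of_eq rfl,
      W_le_one := zero_le_one, j_le := Nat.zero_le k }

theorem knapsack_mechanism_feasible_general
    (n k : ℕ)
    (w : ℕ → ℝ)
    (wstar : ℕ → ℝ) (hwstar : ∀ i, wstar i = max (w i) (1 / (k : ℝ)))
    (p : ℕ → ℝ)
    (vB vS : ℕ → ℝ) :
    (knapFinalA n k wstar p vB vS).card = k ∧
    (∑ a ∈ knapFinalA n k wstar p vB vS, Sum.elim w (fun _ => (0 : ℝ)) a) ≤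
      (∑ a ∈ knapFinalA n k wstar p vB vS, Sum.elim wstar (fun _ => (0 : ℝ)) a) ∧
    (∑ a ∈ knapFinalA n k wstar p vB vS, Sum.elim wstar (fun _ => (0 : ℝ)) a) ≤ 1 := by
  have hws : ∀ i, 0 ≤ wstar i := fun i => hwstar i ▸ le_max_of_le_right (by positivity)
  have hinv := knapRun_invariant hws n k p vB vS
  refine ⟨hinv.card_union_remainingSellers,
    buyerWeight_mono (fun i => hwstar i ▸ le_max_left _ _) _, ?_⟩
  change buyerWeight wstar (_ ∪ remainingSellers k _) ≤ 1
  rw [remainingSellers, buyerWeight_union_image_inr]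
  exact hinv.buyerWeight_le.trans hinv.W_le_one

/-- **Feasibility of the knapsack mechanism (Algorithm 1).**
For every valuation profile, the returned set `A` contains exactly `k` agents (exactly `k`
items are allocated), and the buyers in `A` satisfy the knapsack constraint:
`∑_{i ∈ A ∩ B} w_i ≤ ∑_{i ∈ A ∩ B} w_i* ≤ 1`. -/
theorem knapsack_mechanism_feasible
    (n k : ℕ) (hk : 2 ≤ k)
    (w : ℕ → ℝ) (hw0 : ∀ i, i < n → 0 ≤ w i) (hw2 : ∀ i, i < n → w i ≤ 1 / 2)
    (hsort : ∀ i j, i ≤ j → j < n → w j ≤ w i)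
    (wstar : ℕ → ℝ) (hwstar : ∀ i, wstar i = max (w i) (1 / (k : ℝ)))
    (p : ℕ → ℝ) (hp : ∀ i, 0 ≤ p i)
    (vB vS : ℕ → ℝ) (hvB : ∀ i, 0 ≤ vB i) (hvS : ∀ j, 0 ≤ vS j) :
    (knapFinalA n k wstar p vB vS).card = k ∧
    (∑ a ∈ knapFinalA n k wstar p vB vS, Sum.elim w (fun _ => (0 : ℝ)) a) ≤
      (∑ a ∈ knapFinalA n k wstar p vB vS, Sum.elim wstar (fun _ => (0 : ℝ)) a) ∧
    (∑ a ∈ knapFinalA n k wstar p vB vS, Sum.elim wstar (fun _ => (0 : ℝ)) a) ≤ 1 :=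
  knapsack_mechanism_feasible_general n k w wstar hwstar p vB vS
end
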